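/- arXiv:1507.07213 — 12 statements merged into one kernel-verified Lean document; each statement's English description precedes it below -/
import Mathlib

section
/- Let (S, ≤) be a partially ordered set. The set B(S,≤) of finitely generated lower subsets of S (lower sets that are the downward closure of a finite subset), with union as join, is the free B-module on the poset (S,≤): for any join-semilattice μ with bottom and any monotone map f : S → μ, there is a unique bottom-preserving join-homomorphism B(S,≤) → μ sending the principal lower set of x to f(x). -/
/-!
Every finitely generated lower set is the join `F.sup pt` of the principal lower sets of a
finite set `F` of generators, so a join-homomorphism out of `FGLower S` is determined by its
values on principal lower sets, and the only candidate sends `↓F` to `F.sup f`. This is well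
defined because for monotone `f` the value `F.sup f` depends only on `↓F`: if `↓F ⊆ ↓G` then
every `a ∈ F` lies below some `b ∈ G`, whence `f a ≤ f b ≤ G.sup f`.
-/

/-- The finitely generated lower subsets of a preordered set `S`:
lower sets which are the downward closure of a finite subset. -/
def FGLower (S : Type*) [Preorder S] : Type _ :=
  {L : LowerSet S // ∃ F : Finset S, L = lowerClosure (F : Set S)}

namespace FGLower

variable {S : Type*} [Preorder S]

instance : SemilatticeSup (FGLower S) :=
  Subtype.semilatticeSup fun L M ⟨F, hF⟩ ⟨G, hG⟩ => by
    classical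
    exact ⟨F ∪ G, by simp [hF, hG, lowerClosure_union]⟩

instance : OrderBot (FGLower S) :=
  Subtype.orderBot ⟨∅, by simp⟩

/-- The principal finitely generated lower set on a point. -/
def pt (x : S) : FGLower S := ⟨lowerClosure {x}, ⟨{x}, by simp⟩⟩

end FGLower

theorem Finset.sup_le_sup_of_lowerClosure_le {S μ : Type*} [Preorder S] [SemilatticeSup μ]
    [OrderBot μ] {f : S → μ} (hf : Monotone f) {F G : Finset S}
    (h : lowerClosure (F : Set S) ≤ lowerClosure (G : Set S)) : F.sup f ≤ G.sup f := by
  refine Finset.sup_le fun a ha => ?_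
  obtain ⟨b, hb, hab⟩ := lowerClosure_le.mp h ha
  exact (hf hab).trans (Finset.le_sup hb)

theorem Finset.sup_eq_sup_of_lowerClosure_eq {S μ : Type*} [Preorder S] [SemilatticeSup μ]
    [OrderBot μ] {f : S → μ} (hf : Monotone f) {F G : Finset S}
    (h : lowerClosure (F : Set S) = lowerClosure (G : Set S)) : F.sup f = G.sup f :=
  (Finset.sup_le_sup_of_lowerClosure_le hf h.le).antisymm
    (Finset.sup_le_sup_of_lowerClosure_le hf h.ge)

namespace FGLower

variable {S : Type*} [Preorder S] {μ : Type*} [SemilatticeSup μ] [OrderBot μ]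

@[simp] theorem val_sup (L M : FGLower S) : (L ⊔ M).1 = L.1 ⊔ M.1 := rfl

@[simp] theorem val_bot : (⊥ : FGLower S).1 = ⊥ := rfl

@[simp] theorem val_pt (x : S) : (pt x).1 = lowerClosure {x} := rfl

theorem val_finsetSup_pt (F : Finset S) : (F.sup pt).1 = lowerClosure (F : Set S) := by
  classical
  induction F using Finset.induction with
  | empty => simp
  | insert a F _ ih =>
    rw [Finset.sup_insert, val_sup, ih, Finset.coe_insert, Set.insert_eq, lowerClosure_union,
      val_pt]

theorem exists_eq_finsetSup_pt (L : FGLower S) : ∃ F : Finset S, L = F.sup pt := by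
  obtain ⟨F, hF⟩ := L.2
  exact ⟨F, Subtype.ext (by rw [hF, val_finsetSup_pt])⟩

theorem supBotHom_ext {g h : SupBotHom (FGLower S) μ} (hgh : ∀ x, g (pt x) = h (pt x)) :
    g = h := by
  ext L
  obtain ⟨F, rfl⟩ := exists_eq_finsetSup_pt L
  simp only [map_finset_sup]
  exact Finset.sup_congr rfl fun x _ => hgh x

noncomputable def extend (f : S → μ) (L : FGLower S) : μ := L.2.choose.sup f

theorem extend_eq {f : S → μ} (hf : Monotone f) {L : FGLower S} {F : Finset S}
    (hF : L.1 = lowerClosure (F : Set S)) : extend f L = F.sup f :=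
  Finset.sup_eq_sup_of_lowerClosure_eq hf (L.2.choose_spec ▸ hF)

theorem extend_finsetSup_pt {f : S → μ} (hf : Monotone f) (F : Finset S) :
    extend f (F.sup pt) = F.sup f :=
  extend_eq hf (val_finsetSup_pt F)

noncomputable def lift (f : S → μ) (hf : Monotone f) : SupBotHom (FGLower S) μ where
  toFun := extend f
  map_sup' L M := by
    classical
    obtain ⟨F, rfl⟩ := exists_eq_finsetSup_pt L
    obtain ⟨G, rfl⟩ := exists_eq_finsetSup_pt M
    rw [← Finset.sup_union, extend_finsetSup_pt hf, extend_finsetSup_pt hf,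
      extend_finsetSup_pt hf, Finset.sup_union]
  map_bot' := by simpa using extend_finsetSup_pt hf (∅ : Finset S)

@[simp] theorem lift_pt {f : S → μ} (hf : Monotone f) (x : S) : lift f hf (pt x) = f x := by
  simpa [lift] using extend_finsetSup_pt hf {x}

end FGLower

/-- `B(S,≤)`, the finitely generated lower subsets of a poset `(S,≤)`
with union as join, is the free `𝔹`-module on the poset `(S,≤)`: for any
join-semilattice `μ` with bottom and any monotone `f : S → μ`, there is a unique
bottom-preserving join-homomorphism `B(S,≤) → μ` sending the principal lower set of
`x` to `f x`. -/
theorem stmt1 {S : Type*} [PartialOrder S] {μ : Type*} [SemilatticeSup μ] [OrderBot μ]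
    (f : S → μ) (hf : Monotone f) :
    ∃! h : SupBotHom (FGLower S) μ, ∀ x : S, h (FGLower.pt x) = f x :=
  ⟨FGLower.lift f hf, FGLower.lift_pt hf, fun _ hg =>
    FGLower.supBotHom_ext fun x => by rw [hg, FGLower.lift_pt]⟩
end

section
/- Let p : (S₁,≤) → (S₂,≤) be a bijective monotone map of posets and let σ : B(S₂,≤) → B(S₁,≤) be a monotone map that is a section of the induced join-homomorphism B(p) : B(S₁,≤) → B(S₂,≤) (given by taking images of lower sets and closing downward). Then σ is right adjoint to B(p) (i.e., B(p)(Y) ⊆ X if and only if Y ⊆ σ(X)) and σ preserves finite joins. -/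
/-!
Since `B(p) (σ ↓(p y)) = ↓(p y)`, some `z ∈ σ ↓(p y)` has `p y ≤ p z ≤ p y`, so `z = y` by
injectivity of `p`; monotonicity of `σ` then gives `y ∈ σ X ↔ p y ∈ X` for every `X`. Thus `σ` is
the preimage map `X ↦ p⁻¹ X`, which is right adjoint to `B(p)` and preserves unions and `∅`.
-/

namespace FGLower

section Basic

variable {S : Type*} [Preorder S]

theorem ext {L M : FGLower S} (h : ∀ a, a ∈ L.1 ↔ a ∈ M.1) : L = M :=
  Subtype.ext (SetLike.ext h)

theorem mem_sup_iff {L M : FGLower S} {a : S} : a ∈ (L ⊔ M).1 ↔ a ∈ L.1 ∨ a ∈ M.1 :=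
  LowerSet.mem_sup_iff

theorem notMem_bot (a : S) : a ∉ (⊥ : FGLower S).1 :=
  LowerSet.notMem_bot

def Iic (a : S) : FGLower S :=
  ⟨LowerSet.Iic a, {a}, by simp⟩

theorem mem_Iic_iff {a b : S} : b ∈ (Iic a).1 ↔ b ≤ a :=
  LowerSet.mem_Iic_iff

theorem Iic_le_iff {a : S} {L : FGLower S} : Iic a ≤ L ↔ a ∈ L.1 :=
  LowerSet.Iic_le

end Basic

/-- `Bp` is the map `B(p)` induced by `p`. -/
def IsInducedBy {S₁ S₂ : Type*} [Preorder S₁] [Preorder S₂] (p : S₁ → S₂)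
    (Bp : FGLower S₁ → FGLower S₂) : Prop :=
  ∀ L : FGLower S₁, ((Bp L).1 : Set S₂) = ↑(lowerClosure (p '' ((L.1 : Set S₁))))

section Induced

variable {S₁ S₂ : Type*} [Preorder S₁] [Preorder S₂] {p : S₁ → S₂}
  {Bp : FGLower S₁ → FGLower S₂}

theorem IsInducedBy.mem_of_mem (hBp : IsInducedBy p Bp) {L : FGLower S₁} {y : S₁}
    (hy : y ∈ L.1) : p y ∈ (Bp L).1 := by
  change p y ∈ ((Bp L).1 : Set S₂)
  rw [hBp]
  exact subset_lowerClosure ⟨y, hy, rfl⟩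

theorem IsInducedBy.monotone (hBp : IsInducedBy p Bp) : Monotone Bp := by
  intro L M hLM
  change ((Bp L).1 : Set S₂) ⊆ (Bp M).1
  rw [hBp, hBp]
  exact lowerClosure_mono (Set.image_mono hLM)

end Induced

section MonotoneSection

variable {S₁ S₂ : Type*} [Preorder S₁] [PartialOrder S₂] {p : S₁ → S₂}
  {Bp : FGLower S₁ → FGLower S₂} {σ : FGLower S₂ → FGLower S₁}

theorem IsInducedBy.mem_section_iff (hBp : IsInducedBy p Bp) (hinj : Function.Injective p)
    (hσ : Monotone σ) (hsec : ∀ X, Bp (σ X) = X) {y : S₁} {X : FGLower S₂} :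
    y ∈ (σ X).1 ↔ p y ∈ X.1 := by
  refine ⟨fun hy => hsec X ▸ hBp.mem_of_mem hy, fun hyX => ?_⟩
  have hy_mem : p y ∈ ((Bp (σ (Iic (p y)))).1 : Set S₂) := by
    rw [hsec]
    exact mem_Iic_iff.2 le_rfl
  rw [hBp] at hy_mem
  obtain ⟨_, ⟨z, hz, rfl⟩, hyz⟩ := hy_mem
  have hzy : p z ≤ p y := by
    simpa only [hsec, mem_Iic_iff] using hBp.mem_of_mem (L := σ (Iic (p y))) hz
  obtain rfl : z = y := hinj (le_antisymm hzy hyz)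
  exact hσ (Iic_le_iff.2 hyX) hz

theorem IsInducedBy.galoisConnection_of_section (hBp : IsInducedBy p Bp)
    (hinj : Function.Injective p) (hσ : Monotone σ) (hsec : ∀ X, Bp (σ X) = X) :
    GaloisConnection Bp σ := fun _ X =>
  ⟨fun h _ hy => (hBp.mem_section_iff hinj hσ hsec).2 (h (hBp.mem_of_mem hy)),
    fun h => hsec X ▸ hBp.monotone h⟩

theorem IsInducedBy.map_sup_of_section (hBp : IsInducedBy p Bp) (hinj : Function.Injective p)
    (hσ : Monotone σ) (hsec : ∀ X, Bp (σ X) = X) (X Y : FGLower S₂) :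
    σ (X ⊔ Y) = σ X ⊔ σ Y :=
  ext fun _ => by simp only [mem_sup_iff, hBp.mem_section_iff hinj hσ hsec]

theorem IsInducedBy.map_bot_of_section (hBp : IsInducedBy p Bp) (hinj : Function.Injective p)
    (hσ : Monotone σ) (hsec : ∀ X, Bp (σ X) = X) : σ ⊥ = ⊥ :=
  ext fun _ => by simp only [notMem_bot, hBp.mem_section_iff hinj hσ hsec]

end MonotoneSection

end FGLower

theorem stmt2_general {S₁ S₂ : Type*} [PartialOrder S₁] [PartialOrder S₂]
    (p : S₁ → S₂) (hbij : Function.Bijective p)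
    (Bp : FGLower S₁ → FGLower S₂)
    (hBp : ∀ L : FGLower S₁,
      ((Bp L).1 : Set S₂) = ↑(lowerClosure (p '' ((L.1 : Set S₁)))))
    (σ : FGLower S₂ → FGLower S₁) (hσmono : Monotone σ)
    (hsec : ∀ X : FGLower S₂, Bp (σ X) = X) :
    (∀ (Y : FGLower S₁) (X : FGLower S₂), Bp Y ≤ X ↔ Y ≤ σ X) ∧
    (∀ X Y : FGLower S₂, σ (X ⊔ Y) = σ X ⊔ σ Y) ∧ σ ⊥ = ⊥ :=
  have hBp' : FGLower.IsInducedBy p Bp := hBp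
  ⟨hBp'.galoisConnection_of_section hbij.1 hσmono hsec,
    hBp'.map_sup_of_section hbij.1 hσmono hsec, hBp'.map_bot_of_section hbij.1 hσmono hsec⟩

/-- **Monotone sections.** Let `p : S₁ → S₂` be a bijective monotone
map of posets and `Bp : B(S₁,≤) → B(S₂,≤)` the induced join-homomorphism (taking a
lower set to the lower closure of its image).  If a monotone map
`σ : B(S₂,≤) → B(S₁,≤)` is a section of `Bp`, then `σ` is right adjoint to `Bp` and
preserves finite joins (including the empty join, i.e. bottom). -/
theorem stmt2 {S₁ S₂ : Type*} [PartialOrder S₁] [PartialOrder S₂]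
    (p : S₁ → S₂) (hp : Monotone p) (hbij : Function.Bijective p)
    (Bp : FGLower S₁ → FGLower S₂)
    (hBp : ∀ L : FGLower S₁,
      ((Bp L).1 : Set S₂) = ↑(lowerClosure (p '' ((L.1 : Set S₁)))))
    (σ : FGLower S₂ → FGLower S₁) (hσmono : Monotone σ)
    (hsec : ∀ X : FGLower S₂, Bp (σ X) = X) :
    (∀ (Y : FGLower S₁) (X : FGLower S₂), Bp Y ≤ X ↔ Y ≤ σ X) ∧
    (∀ X Y : FGLower S₂, σ (X ⊔ Y) = σ X ⊔ σ Y) ∧ σ ⊥ = ⊥ :=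
  stmt2_general p hbij Bp hBp σ hσmono hsec
end

section
/- A join-semilattice μ with bottom element is isomorphic as a B-module to the free B-module on a set (i.e., to the semilattice of finite subsets of some set under union) if and only if every element of μ has a unique primitive decomposition, i.e., a unique expression as a finite join of ∨-primitive elements. -/
/-!
In `Finset T` the primitive elements are the singletons, so a finite set decomposes uniquely
into its singletons, and this transfers along order isomorphisms. Conversely, if decompositions
are unique, the decomposition of `X` contains every primitive `P ≤ X` (otherwise adding `P`
gives a second one), so `X ↦ {P primitive | P ≤ X}` is an order isomorphism from `μ` onto the
finite sets of primitive elements.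
-/

/-- An element of a join-semilattice with bottom is `∨`-primitive if it is not `⊥`
and whenever it is a finite join it is one of the joinands. -/
def Primitive {μ : Type*} [SemilatticeSup μ] [OrderBot μ] (X : μ) : Prop :=
  X ≠ ⊥ ∧ ∀ F : Finset μ, X = F.sup id → X ∈ F

def IsPrimitiveDecomp {α : Type*} [SemilatticeSup α] [OrderBot α] (X : α) (F : Finset α) :
    Prop :=
  (∀ Y ∈ F, Primitive Y) ∧ X = F.sup id

section Primitive

variable {α β : Type*} [SemilatticeSup α] [SemilatticeSup β]

theorem OrderIso.supIrred_apply_iff (e : α ≃o β) {X : α} : SupIrred (e X) ↔ SupIrred X := by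
  simp only [SupIrred, e.isMin_apply, e.surjective.forall₂, ← map_sup, e.apply_eq_iff_eq]

variable [OrderBot α] [OrderBot β]

theorem primitive_iff_supIrred {X : α} : Primitive X ↔ SupIrred X := by
  constructor
  · rintro ⟨hX, hjoin⟩
    refine ⟨fun hmin => hX hmin.eq_bot, fun b c hbc => ?_⟩
    classical
    have hmem := hjoin {b, c} (by simp [hbc])
    simp only [Finset.mem_insert, Finset.mem_singleton] at hmem
    exact hmem.imp Eq.symm Eq.symm
  · refine fun hX => ⟨hX.ne_bot, fun F hF => ?_⟩
    obtain ⟨Y, hY, rfl⟩ := hX.finset_sup_eq hF.symm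
    exact hY

theorem OrderIso.primitive_apply_iff (e : α ≃o β) {X : α} : Primitive (e X) ↔ Primitive X := by
  simp only [primitive_iff_supIrred, e.supIrred_apply_iff]

theorem OrderIso.isPrimitiveDecomp_map_iff (e : α ≃o β) {X : α} {F : Finset α} :
    IsPrimitiveDecomp (e X) (F.map e.toEquiv.toEmbedding) ↔ IsPrimitiveDecomp X F := by
  have hsup : F.sup e = e (F.sup id) := (map_finset_sup e F id).symm
  simp only [IsPrimitiveDecomp, Finset.forall_mem_map, Equiv.coe_toEmbedding, coe_toEquiv,
    e.primitive_apply_iff, Finset.sup_map, Function.id_comp, hsup, e.apply_eq_iff_eq]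

theorem OrderIso.existsUnique_isPrimitiveDecomp_iff (e : α ≃o β) (X : α) :
    (∃! F, IsPrimitiveDecomp (e X) F) ↔ ∃! F, IsPrimitiveDecomp X F :=
  (e.toEquiv.finsetCongr.existsUnique_congr fun _ => e.isPrimitiveDecomp_map_iff.symm).symm

end Primitive

namespace Finset

variable {T : Type*} [DecidableEq T]

theorem supIrred_iff {s : Finset T} : SupIrred s ↔ ∃ t, s = {t} := by
  constructor
  · intro hs
    obtain ⟨t, -, ht⟩ := hs.finset_sup_eq (sup_singleton_eq_self s)
    exact ⟨t, ht.symm⟩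
  · rintro ⟨t, rfl⟩
    refine ⟨fun h => singleton_ne_empty t h.eq_bot, fun b c hbc => ?_⟩
    have hsub : b ⊆ {t} ∧ c ⊆ {t} := by simp [← hbc, subset_union_left, subset_union_right]
    have ht : t ∈ b ∪ c := by rw [← sup_eq_union, hbc]; exact mem_singleton_self t
    exact (mem_union.1 ht).imp (fun h => (Nonempty.subset_singleton_iff ⟨t, h⟩).1 hsub.1)
      (fun h => (Nonempty.subset_singleton_iff ⟨t, h⟩).1 hsub.2)

theorem primitive_iff {s : Finset T} : Primitive s ↔ ∃ t, s = {t} := by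
  rw [primitive_iff_supIrred, supIrred_iff]

theorem isPrimitiveDecomp_iff {s : Finset T} {F : Finset (Finset T)} :
    IsPrimitiveDecomp s F ↔ F = s.image singleton := by
  constructor
  · rintro ⟨hprim, rfl⟩
    ext u
    constructor
    · intro hu
      obtain ⟨t, rfl⟩ := primitive_iff.1 (hprim u hu)
      exact mem_image_of_mem _ (le_sup (f := id) hu (mem_singleton_self t))
    · simp only [mem_image, mem_sup, id]
      rintro ⟨t, ⟨v, hv, htv⟩, rfl⟩
      obtain ⟨t', rfl⟩ := primitive_iff.1 (hprim v hv)
      rwa [mem_singleton.1 htv]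
  · rintro rfl
    refine ⟨fun u hu => ?_, by rw [sup_image, Function.id_comp, sup_singleton_eq_self]⟩
    obtain ⟨t, -, rfl⟩ := mem_image.1 hu
    exact primitive_iff.2 ⟨t, rfl⟩

theorem existsUnique_isPrimitiveDecomp (s : Finset T) : ∃! F, IsPrimitiveDecomp s F :=
  ⟨s.image singleton, isPrimitiveDecomp_iff.2 rfl, fun _ => isPrimitiveDecomp_iff.1⟩

end Finset

section UniqueDecomp

variable {μ : Type*} [SemilatticeSup μ] [OrderBot μ] {X Y P : μ} {F : Finset μ}

theorem IsPrimitiveDecomp.le_of_mem (hF : IsPrimitiveDecomp X F) (hY : Y ∈ F) : Y ≤ X :=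
  hF.2 ▸ Finset.le_sup (f := id) hY

theorem IsPrimitiveDecomp.insert [DecidableEq μ] (hF : IsPrimitiveDecomp X F) (hP : Primitive P)
    (hPX : P ≤ X) : IsPrimitiveDecomp X (insert P F) :=
  ⟨(Finset.forall_mem_insert _ _ _).2 ⟨hP, hF.1⟩, by
    rw [Finset.sup_insert, id, ← hF.2, sup_eq_right.2 hPX]⟩

theorem IsPrimitiveDecomp.le_iff (hF : IsPrimitiveDecomp X F) :
    X ≤ Y ↔ ∀ P, Primitive P → P ≤ X → P ≤ Y :=
  ⟨fun hXY _ _ hPX => hPX.trans hXY, fun h =>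
    hF.2 ▸ Finset.sup_le fun P hP => h P (hF.1 P hP) (hF.le_of_mem hP)⟩

theorem IsPrimitiveDecomp.mem_iff_le (huniq : ∀ G, IsPrimitiveDecomp X G → G = F)
    (hF : IsPrimitiveDecomp X F) (hP : Primitive P) : P ∈ F ↔ P ≤ X := by
  classical
  exact ⟨hF.le_of_mem, fun hPX => huniq _ (hF.insert hP hPX) ▸ Finset.mem_insert_self P F⟩

variable (h : ∀ X : μ, ∃! F, IsPrimitiveDecomp X F)

noncomputable def primitivesBelow (X : μ) : Finset {P : μ // Primitive P} :=
  (h X).exists.choose.preimage Subtype.val Subtype.val_injective.injOn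

theorem mem_primitivesBelow {X : μ} {P : {P : μ // Primitive P}} :
    P ∈ primitivesBelow h X ↔ ↑P ≤ X := by
  have hF := (h X).exists.choose_spec
  rw [primitivesBelow, Finset.mem_preimage,
    hF.mem_iff_le (fun G hG => (h X).unique hG hF) P.2]

theorem primitivesBelow_subset_iff {X Y : μ} :
    primitivesBelow h X ⊆ primitivesBelow h Y ↔ X ≤ Y := by
  rw [(h X).exists.choose_spec.le_iff, Subtype.forall']
  simp only [Finset.subset_iff, mem_primitivesBelow]

theorem primitivesBelow_surjective : Function.Surjective (primitivesBelow h) := by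
  intro G
  have hG : IsPrimitiveDecomp ((G.map (.subtype _)).sup id) (G.map (.subtype _)) :=
    ⟨Finset.forall_mem_map.2 fun P _ => P.2, rfl⟩
  refine ⟨(G.map (.subtype _)).sup id, Finset.ext fun P => ?_⟩
  rw [mem_primitivesBelow, ← hG.mem_iff_le (fun G' hG' => (h _).unique hG' hG) P.2]
  simp [P.2]

noncomputable def primitivesBelowOrderIso : μ ≃o Finset {P : μ // Primitive P} :=
  .ofSurjective (.ofMapLEIff _ fun _ _ => primitivesBelow_subset_iff h)
    (primitivesBelow_surjective h)

end UniqueDecomp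

/-- A join-semilattice `μ` with bottom is isomorphic as a
`𝔹`-module to the free `𝔹`-module on a set (finite subsets of some set under union)
iff every element of `μ` has a unique primitive decomposition: a unique expression as
a finite join of `∨`-primitive elements. -/
theorem stmt5 (μ : Type) [SemilatticeSup μ] [OrderBot μ] :
    (∃ T : Type, haveI := Classical.decEq T; Nonempty (μ ≃o Finset T)) ↔
    (∀ X : μ, ∃! F : Finset μ, (∀ Y ∈ F, Primitive Y) ∧ X = F.sup id) := by
  constructor
  · rintro ⟨T, ⟨e⟩⟩ X
    classical
    exact (e.existsUnique_isPrimitiveDecomp_iff X).1 (Finset.existsUnique_isPrimitiveDecomp (e X))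
  · exact fun h => ⟨_, ⟨primitivesBelowOrderIso h⟩⟩
end

section
/- Let μ be a join-semilattice with bottom, S ⊆ μ a subset, and σ any section (as a function) of the surjective join-homomorphism B(S,≤) → μ sending a finitely generated lower subset of S to its join in μ. If X ∈ μ is ∨-primitive, then σ(X) equals the full lower set S_{≤X} = {Y ∈ S : Y ≤ X}, provided S_{≤X} is a finitely generated lower set. -/
/-- **Sections over primitives.** Let `μ` be a join-semilattice with
bottom, `S ⊆ μ`, and `σ` a set-theoretic section of the surjective join-homomorphism
`B(S,≤) → μ` sending a finitely generated lower subset of `S` to its join in `μ`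
(sectionhood: any finite generating set of `σ X` has join `X`).  If `X` is
`∨`-primitive and the full lower set `S_{≤X}` is a finitely generated lower set, then
`σ X = S_{≤X}`. -/
theorem stmt8 {μ : Type*} [SemilatticeSup μ] [OrderBot μ] (S : Set μ)
    (σ : μ → FGLower (↥S))
    (hσ : ∀ X : μ, ∃ F : Finset ↥S,
      ((σ X).1 : Set ↥S) = ↑(lowerClosure (F : Set ↥S)) ∧ X = F.sup (fun y => (y : μ)))
    (X : μ) (hX : Primitive X)
    (G : Finset ↥S) (hG : {y : ↥S | (y : μ) ≤ X} = ↑(lowerClosure (G : Set ↥S))) :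
    ((σ X).1 : Set ↥S) = {y : ↥S | (y : μ) ≤ X} := by
  obtain ⟨F, hF, hXF⟩ := hσ X
  apply Set.Subset.antisymm
  · intro y hy
    rw [hF] at hy
    obtain ⟨f, hfF, hyf⟩ := hy
    exact le_trans hyf (hXF ▸ Finset.le_sup (f := fun y : ↥S => (y : μ)) hfF)
  · classical
    have : X = (F.image (fun y : ↥S => (y : μ))).sup id := by
      rw [Finset.sup_image]; exact hXF
    have hmem := hX.2 _ this
    obtain ⟨f, hfF, hfX⟩ := Finset.mem_image.mp hmem
    intro y hy
    rw [hF]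
    exact ⟨f, hfF, by rw [← Subtype.coe_le_coe, hfX]; exact hy⟩
end

section
/- Every projective B-module has unique irredundant primitive decompositions: if μ is a projective join-semilattice with bottom, then every element of μ is the join of a unique finite antichain of ∨-primitive elements. -/
def IsProjectiveB (μ : Type) [SemilatticeSup μ] [OrderBot μ] : Prop :=
  ∃ T : Type, haveI := Classical.decEq T;
    ∃ (s : SupBotHom μ (Finset T)) (r : SupBotHom (Finset T) μ), ∀ x, r (s x) = x

section Aux

variable {μ : Type} [SemilatticeSup μ] [OrderBot μ] {T : Type} [DecidableEq T]
  (s : SupBotHom μ (Finset T)) (r : SupBotHom (Finset T) μ)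

set_option linter.unnecessarySimpa false in
lemma aux_rS (S : Finset T) : r S = S.sup (fun t => r {t}) := by
  conv_lhs => rw [show S = S.sup (fun t => ({t} : Finset T)) by
    simpa using (Finset.sup_singleton'' S id).symm]
  rw [map_finset_sup]
  rfl

lemma aux_smono {a b : μ} (hab : a ≤ b) : s a ⊆ s b := OrderHomClass.mono s hab

lemma aux_rmono {A B : Finset T} (hab : A ⊆ B) : r A ≤ r B :=
  OrderHomClass.mono r (Finset.le_iff_subset.2 hab)

lemma prim_char (hr : ∀ x, r (s x) = x) {p : μ} : Primitive p ↔ p ≠ ⊥ ∧ ∃ u ∈ s p, p = r {u} := by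
  constructor
  · rintro ⟨hb, hp⟩
    refine ⟨hb, ?_⟩
    classical
    have h1 : p = ((s p).image (fun t => r {t})).sup id := by
      rw [Finset.sup_image]
      simp only [Function.id_comp]
      rw [← aux_rS r (s p), hr]
    have := hp _ h1
    rw [Finset.mem_image] at this
    obtain ⟨u, hu, hup⟩ := this
    exact ⟨u, hu, hup.symm⟩
  · rintro ⟨hb, u, hu, hup⟩
    refine ⟨hb, fun F hF => ?_⟩
    have hsF : s p = F.sup (fun y => s y) := by
      rw [hF, map_finset_sup]; rfl
    have : u ∈ F.sup (fun y => s y) := hsF ▸ hu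
    rw [Finset.mem_sup] at this
    obtain ⟨y, hy, huy⟩ := this
    have h1 : p ≤ y := by
      rw [hup]
      calc r {u} ≤ r (s y) := aux_rmono r (Finset.singleton_subset_iff.2 huy)
        _ = y := hr y
    have h2 : y ≤ p := by rw [hF]; exact Finset.le_sup (f := id) hy
    rw [le_antisymm h1 h2]; exact hy

lemma prim_prime (hr : ∀ x, r (s x) = x) {p : μ} (hp : Primitive p) (F : Finset μ) (hle : p ≤ F.sup id) :
    ∃ y ∈ F, p ≤ y := by
  obtain ⟨-, u, hu, hup⟩ := (prim_char s r hr).1 hp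
  have : u ∈ s (F.sup id) := aux_smono s hle hu
  rw [map_finset_sup] at this
  rw [Finset.mem_sup] at this
  obtain ⟨y, hy, huy⟩ := this
  refine ⟨y, hy, ?_⟩
  rw [hup]
  calc r {u} ≤ r (s y) := aux_rmono r (Finset.singleton_subset_iff.2 huy)
    _ = y := hr y

lemma good_u (hr : ∀ x, r (s x) = x) (S0 : Finset T) (hS0 : s (r S0) = S0) :
    ∀ t ∈ S0, ∃ u ∈ S0, t ∈ s (r {u}) ∧ u ∈ s (r {u}) := by
  have esub : ∀ t ∈ S0, s (r {t}) ⊆ S0 := by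
    intro t ht
    calc s (r {t}) ⊆ s (r S0) :=
          aux_smono s (aux_rmono r (Finset.singleton_subset_iff.2 ht))
      _ = S0 := hS0
  have key : ∀ n : ℕ, ∀ t ∈ S0, S0.card - (s (r {t})).card ≤ n →
      ∃ u ∈ S0, t ∈ s (r {u}) ∧ u ∈ s (r {u}) := by
    intro n
    induction n with
    | zero =>
      intro t ht hn
      by_cases hself : t ∈ s (r {t})
      · exact ⟨t, ht, hself, hself⟩
      · exfalso
        have hlt : (s (r {t})).card < S0.card :=
          Finset.card_lt_card (Finset.ssubset_iff_of_subset (esub t ht) |>.2 ⟨t, ht, hself⟩)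
        omega
    | succ n ih =>
      intro t ht hn
      by_cases hself : t ∈ s (r {t})
      · exact ⟨t, ht, hself, hself⟩
      · -- find u1 ∈ S0 with t ∈ s (r {u1})
        have htS : t ∈ s (r S0) := by rw [hS0]; exact ht
        rw [aux_rS r S0, map_finset_sup, Finset.mem_sup] at htS
        obtain ⟨u1, hu1, htu1⟩ := htS
        simp only [Function.comp] at htu1
        have hsub : s (r {t}) ⊆ s (r {u1}) := by
          have : r {t} ≤ r {u1} := by
            calc r {t} ≤ r (s (r {u1})) :=
                  aux_rmono r (Finset.singleton_subset_iff.2 htu1)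
              _ = r {u1} := hr _
          exact aux_smono s this
        have hcard : (s (r {t})).card < (s (r {u1})).card :=
          Finset.card_lt_card (Finset.ssubset_iff_of_subset hsub |>.2 ⟨t, htu1, hself⟩)
        obtain ⟨u, huS, hu1u, huu⟩ := ih u1 hu1 (by
          have := Finset.card_le_card (esub u1 hu1)
          omega)
        refine ⟨u, huS, ?_, huu⟩
        have : r {u1} ≤ r {u} := by
          calc r {u1} ≤ r (s (r {u})) :=
                aux_rmono r (Finset.singleton_subset_iff.2 hu1u)
            _ = r {u} := hr _
        exact aux_smono s this htu1
  intro t ht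
  exact key (S0.card - (s (r {t})).card) t ht le_rfl

end Aux

/-- Every projective `𝔹`-module has unique irredundant primitive
decompositions: every element is the join of a unique finite antichain of
`∨`-primitive elements. -/
theorem stmt9 {μ : Type} [SemilatticeSup μ] [OrderBot μ] (h : IsProjectiveB μ) :
    ∀ X : μ, ∃! F : Finset μ,
      (∀ Y ∈ F, Primitive Y) ∧ IsAntichain (· ≤ ·) (F : Set μ) ∧ X = F.sup id := by
  classical
  obtain ⟨T, s, r, hr⟩ := h
  -- uniqueness lemma: an antichain of primitives is contained in any primitive family
  have uniq : ∀ A B : Finset μ, (∀ Y ∈ A, Primitive Y) → (∀ Y ∈ B, Primitive Y) →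
      IsAntichain (· ≤ ·) (A : Set μ) → A.sup id = B.sup id → A ⊆ B := by
    intro A B hA hB hAac hsup p hp
    have hpA : p ≤ B.sup id := hsup ▸ Finset.le_sup (f := id) hp
    obtain ⟨g, hg, hpg⟩ := prim_prime s r hr (hA p hp) B hpA
    have hgA : g ≤ A.sup id := hsup ▸ Finset.le_sup (f := id) hg
    obtain ⟨p', hp', hgp'⟩ := prim_prime s r hr (hB g hg) A hgA
    have hpp' : p = p' := by
      by_contra hne
      exact hAac hp hp' hne (hpg.trans hgp')
    have : p = g := le_antisymm hpg (hpp' ▸ hgp')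
    exact this ▸ hg
  intro X
  have hS0 : s (r (s X)) = s X := by rw [hr]
  set S0 := s X with hS0def
  -- the set of primitive generators
  set F0 : Finset μ := (S0.filter (fun t => t ∈ s (r {t}))).image (fun t => r {t})
    with hF0def
  have hF0prim : ∀ p ∈ F0, Primitive p := by
    intro p hp
    rw [hF0def, Finset.mem_image] at hp
    obtain ⟨u, hu, hup⟩ := hp
    rw [Finset.mem_filter] at hu
    refine (prim_char s r hr).2 ⟨?_, u, ?_, hup.symm⟩
    · intro hbot
      have : s p = (∅ : Finset T) := by rw [hbot, map_bot]; rfl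
      rw [← hup] at hbot
      have := hu.2
      rw [hbot, map_bot] at this
      simp at this
    · rw [← hup]; exact hu.2
  have hF0leX : ∀ p ∈ F0, p ≤ X := by
    intro p hp
    rw [hF0def, Finset.mem_image] at hp
    obtain ⟨u, hu, hup⟩ := hp
    rw [Finset.mem_filter] at hu
    rw [← hup]
    calc r {u} ≤ r S0 := aux_rmono r (Finset.singleton_subset_iff.2 hu.1)
      _ = X := by rw [hS0def, hr]
  have hXle : X ≤ F0.sup id := by
    have hX : X = S0.sup (fun t => r {t}) := by
      rw [hS0def]
      rw [← aux_rS r (s X), hr]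
    rw [hX]
    apply Finset.sup_le
    intro t ht
    obtain ⟨u, huS, htu, huu⟩ := good_u s r hr S0 hS0 t ht
    have hmem : r {u} ∈ F0 := by
      rw [hF0def, Finset.mem_image]
      exact ⟨u, Finset.mem_filter.2 ⟨huS, huu⟩, rfl⟩
    calc r {t} ≤ r {u} := by
          calc r {t} ≤ r (s (r {u})) := aux_rmono r (Finset.singleton_subset_iff.2 htu)
            _ = r {u} := hr _
      _ ≤ F0.sup id := Finset.le_sup (f := id) hmem
  -- maximal elements
  set F : Finset μ := F0.filter (fun p => ∀ q ∈ F0, ¬ p < q) with hFdef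
  have hFsub : F ⊆ F0 := Finset.filter_subset _ _
  have hFprim : ∀ p ∈ F, Primitive p := fun p hp => hF0prim p (hFsub hp)
  have hFac : IsAntichain (· ≤ ·) (F : Set μ) := by
    intro a ha b hb hne hle
    rw [Finset.mem_coe, hFdef, Finset.mem_filter] at ha hb
    exact ha.2 b hb.1 (lt_of_le_of_ne hle hne)
  have hle2 : ∀ p ∈ F0, ∃ b ∈ F, p ≤ b := by
    intro p hp
    obtain ⟨b, hpb, hbmax⟩ := F0.exists_le_maximal hp
    refine ⟨b, ?_, hpb⟩
    rw [hFdef, Finset.mem_filter]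
    refine ⟨hbmax.1, fun q hq hlt => ?_⟩
    exact absurd (hbmax.2 hq hlt.le) (not_le_of_gt hlt)
  have hXF : X = F.sup id := by
    apply le_antisymm
    · refine hXle.trans (Finset.sup_le fun p hp => ?_)
      obtain ⟨b, hb, hpb⟩ := hle2 p hp
      exact hpb.trans (Finset.le_sup (f := id) hb)
    · exact Finset.sup_le fun p hp => hF0leX p (hFsub hp)
  refine ⟨F, ⟨hFprim, hFac, hXF⟩, ?_⟩
  rintro G ⟨hGprim, hGac, hXG⟩
  have hsupeq : G.sup id = F.sup id := by rw [← hXG, ← hXF]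
  exact Finset.Subset.antisymm (uniq G F hGprim hFprim hGac hsupeq)
    (uniq F G hFprim hGprim hFac hsupeq.symm)
end

section
/- Let A be a commutative monoid (possibly with zero). Every projective A-module splits as a coproduct of cyclic submodules, each isomorphic to a retract of A (the image of an idempotent endomorphism of A). Consequently, if A is a domain (cancellative away from zero), every projective A-module is free. -/
/-- A module `M` over a commutative monoid `A` (an `A`-act) is projective if every
`A`-equivariant surjection onto `M` from a free `A`-module (a disjoint union
`I × A` of copies of `A`) admits an `A`-equivariant section. -/
def IsProjectiveAct (A : Type) [CommMonoid A] (M : Type) [MulAction A M] : Prop :=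
  ∀ (I : Type) (π : I × A → M),
    (∀ (a : A) (x : I × A), π (x.1, a * x.2) = a • π x) →
    Function.Surjective π →
    ∃ s : M → I × A,
      (∀ (a : A) (m : M), s (a • m) = ((s m).1, a * (s m).2)) ∧ ∀ m, π (s m) = m

private lemma sigma_subtype_ext {I A : Type} {p : I → A → Prop} :
    ∀ {x y : Σ i : I, {a : A // p i a}}, x.1 = y.1 → (x.2 : A) = (y.2 : A) → x = y := by
  rintro ⟨i, a⟩ ⟨j, b⟩ (rfl : i = j) (h2 : (a : A) = b)
  simp [Subtype.ext h2]

/-- Over a commutative monoid `A`, every projective `A`-module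
splits as a coproduct of cyclic submodules, each isomorphic to the image of an
idempotent endomorphism of `A`; consequently, if `A` is a domain (cancellative),
every projective `A`-module is free. -/
theorem stmt10 (A : Type) [CommMonoid A] (M : Type) [MulAction A M]
    (hproj : IsProjectiveAct A M) :
    (∃ (I : Type) (e : I → A), (∀ i, IsIdempotentElem (e i)) ∧
      ∃ g : M → Σ i : I, {a : A // e i * a = a}, Function.Bijective g ∧
        ∀ (c : A) (m : M),
          (g (c • m)).1 = (g m).1 ∧ ((g (c • m)).2 : A) = c * ((g m).2 : A)) ∧
    ((∀ a b c : A, a * b = a * c → b = c) →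
      ∃ (I : Type) (g : M → I × A), Function.Bijective g ∧
        ∀ (c : A) (m : M), g (c • m) = ((g m).1, c * (g m).2)) := by
  obtain ⟨s, hs1, hs2⟩ := hproj M (fun x => x.2 • x.1)
    (fun a x => mul_smul a x.2 x.1) (fun m => ⟨(m, 1), one_smul A m⟩)
  -- key self-similarity: s m = s ((s m).2 • (s m).1)
  have key : ∀ m : M, s m = ((s ((s m).1)).1, (s m).2 * (s ((s m).1)).2) := by
    intro m
    conv_lhs => rw [← hs2 m, hs1]
  have key1 : ∀ m : M, (s m).1 = (s ((s m).1)).1 := fun m => by conv_lhs => rw [key m]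
  have key2 : ∀ m : M, (s m).2 = (s m).2 * (s ((s m).1)).2 :=
    fun m => by conv_lhs => rw [key m]
  -- the index set: fixed points of m ↦ (s m).1
  set I : Type := {i : M // (s i).1 = i} with hI
  set e : I → A := fun i => (s i.1).2 with he
  have hidem : ∀ i : I, IsIdempotentElem (e i) := by
    rintro ⟨i, hi⟩
    have := key2 i
    rw [hi] at this
    exact this.symm
  have hfix : ∀ m : M, e ⟨(s m).1, (key1 m).symm⟩ * (s m).2 = (s m).2 := by
    intro m
    rw [he]
    calc (s (s m).1).2 * (s m).2 = (s m).2 * (s ((s m).1)).2 := mul_comm _ _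
    _ = (s m).2 := (key2 m).symm
  refine ⟨⟨I, e, hidem, fun m => ⟨⟨(s m).1, (key1 m).symm⟩, ⟨(s m).2, hfix m⟩⟩, ?_, ?_⟩, ?_⟩
  · rw [Function.bijective_iff_has_inverse]
    refine ⟨fun x => (x.2 : A) • (x.1 : M), fun m => hs2 m, ?_⟩
    rintro ⟨⟨i, hi⟩, ⟨a, ha⟩⟩
    refine sigma_subtype_ext ?_ ?_
    · show Subtype.mk _ _ = Subtype.mk _ _
      apply Subtype.ext
      show (s (a • i)).1 = i
      rw [hs1, hi]
    · show (s (a • i)).2 = a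
      rw [hs1]
      simp only
      calc a * (s i).2 = (s i).2 * a := mul_comm _ _
      _ = a := ha
  · intro c m
    constructor
    · show Subtype.mk _ _ = Subtype.mk _ _
      exact Subtype.ext (by show (s (c • m)).1 = (s m).1; rw [hs1])
    · show (s (c • m)).2 = c * (s m).2
      rw [hs1]
  · intro hcanc
    have he1 : ∀ i : I, e i = 1 := by
      intro i
      have := hidem i
      exact hcanc (e i) (e i) 1 (by rw [this, mul_one])
    refine ⟨I, fun m => (⟨(s m).1, (key1 m).symm⟩, (s m).2), ?_, ?_⟩
    · rw [Function.bijective_iff_has_inverse]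
      refine ⟨fun x => x.2 • (x.1 : M), fun m => hs2 m, ?_⟩
      rintro ⟨⟨i, hi⟩, a⟩
      have h1 : (s (a • i)).1 = i := by rw [hs1, hi]
      have h2 : (s (a • i)).2 = a := by
        rw [hs1]
        simp only
        have := he1 ⟨i, hi⟩
        rw [he] at this
        simp only at this
        rw [this, mul_one]
      exact Prod.ext (Subtype.ext h1) h2
    · intro c m
      refine Prod.ext (Subtype.ext ?_) ?_
      · show (s (c • m)).1 = (s m).1
        rw [hs1]
      · show (s (c • m)).2 = c * (s m).2
        rw [hs1]
end

section
/- (Equational criterion for flatness over semirings.) Let A be a commutative semiring, M a flat A-module, and v : Aⁿ → M a homomorphism from a finite free module. Suppose f, g : A → Aⁿ are two homomorphisms with v ∘ f = v ∘ g. Then v factors as Aⁿ → F → M where F is a finite free module and the composite Aⁿ → F coequalizes f and g (i.e., the images of f and g in F under the factoring map agree). -/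
/-!
Since `Aⁿ` is finite free, `v : Aⁿ → M` is `dualTensorHom` of some tensor
`t = ∑ φᵢ ⊗ xᵢ ∈ (Aⁿ)* ⊗ M`. Evaluating the dual factor at `a = f 1` and at `b = g 1` sends `t`
to `1 ⊗ v a = 1 ⊗ v b`, so `t` lies in the equalizer of `ev_a ⊗ 1` and `ev_b ⊗ 1`. Flatness
rewrites `t` as `∑ kⱼ ⊗ yⱼ` with every functional `kⱼ` in the equalizer of `ev_a` and `ev_b`,
i.e. `kⱼ a = kⱼ b`; then `w = (kⱼ)ⱼ : Aⁿ → Aᵐ` and `u = ∑ⱼ (·)ⱼ yⱼ` do the job.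
-/

open TensorProduct

/-- Flatness of a semimodule `M` over a commutative semiring `A`: the functor
`- ⊗[A] M` preserves equalizers, i.e. for every pair of `A`-linear maps
`f g : N → P`, the canonical map `eqLocus f g ⊗ M → N ⊗ M` is injective with image
exactly the equalizer of `f ⊗ 1` and `g ⊗ 1`. -/
def TensorFlat (A : Type) [CommSemiring A] (M : Type) [AddCommMonoid M]
    [Module A M] : Prop :=
  ∀ (N P : Type) [AddCommMonoid N] [AddCommMonoid P] [Module A N] [Module A P]
    (f g : N →ₗ[A] P),
    Function.Injective
      (LinearMap.rTensor M (LinearMap.eqLocus f g).subtype) ∧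
    LinearMap.range (LinearMap.rTensor M (LinearMap.eqLocus f g).subtype) =
      LinearMap.eqLocus (LinearMap.rTensor M f) (LinearMap.rTensor M g)

open Module

section

variable {A : Type*} [CommSemiring A] {N M : Type*} [AddCommMonoid N] [Module A N]
  [AddCommMonoid M] [Module A M]

theorem lid_rTensor_dualEval_eq_dualTensorHom (s : Dual A N ⊗[A] M) (a : N) :
    TensorProduct.lid A M ((Dual.eval A N a).rTensor M s) = dualTensorHom A N M s a := by
  induction s with
  | zero => simp
  | tmul φ x => simp [dualTensorHom_apply]
  | add s t hs ht => simp only [map_add, LinearMap.add_apply, hs, ht]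

theorem dualTensorHom_sum_tmul {m : ℕ} (k : Fin m → Dual A N) (y : Fin m → M) :
    dualTensorHom A N M (∑ j, k j ⊗ₜ y j) = Fintype.linearCombination A y ∘ₗ LinearMap.pi k := by
  ext z
  simp [dualTensorHom_apply, Fintype.linearCombination_apply]

end

theorem TensorFlat.exists_sum_tmul_of_rTensor_eq {A M : Type} [CommSemiring A]
    [AddCommMonoid M] [Module A M] (hM : TensorFlat A M) {N P : Type} [AddCommMonoid N]
    [AddCommMonoid P] [Module A N] [Module A P] (f g : N →ₗ[A] P) (t : N ⊗[A] M)
    (ht : f.rTensor M t = g.rTensor M t) :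
    ∃ (m : ℕ) (k : Fin m → N) (y : Fin m → M),
      (∀ j, f (k j) = g (k j)) ∧ t = ∑ j, k j ⊗ₜ y j := by
  obtain ⟨s, rfl⟩ : t ∈ LinearMap.range ((LinearMap.eqLocus f g).subtype.rTensor M) := by
    rw [(hM N P f g).2]
    exact ht
  obtain ⟨m, k, y, rfl⟩ := exists_sum_tmul_eq s
  exact ⟨m, fun j => k j, y, fun j => (k j).2, by simp⟩

theorem TensorFlat.exists_factor_eq_of_dualTensorHom_eq {A M : Type} [CommSemiring A]
    [AddCommMonoid M] [Module A M] (hM : TensorFlat A M) {N : Type} [AddCommMonoid N]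
    [Module A N] (s : Dual A N ⊗[A] M) {a b : N}
    (hab : dualTensorHom A N M s a = dualTensorHom A N M s b) :
    ∃ (m : ℕ) (w : N →ₗ[A] (Fin m → A)) (u : (Fin m → A) →ₗ[A] M),
      u ∘ₗ w = dualTensorHom A N M s ∧ w a = w b := by
  have heval : (Dual.eval A N a).rTensor M s = (Dual.eval A N b).rTensor M s :=
    (TensorProduct.lid A M).injective (by
      rw [lid_rTensor_dualEval_eq_dualTensorHom, lid_rTensor_dualEval_eq_dualTensorHom, hab])
  obtain ⟨m, k, y, hk, rfl⟩ := hM.exists_sum_tmul_of_rTensor_eq _ _ s heval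
  exact ⟨m, LinearMap.pi k, Fintype.linearCombination A y, (dualTensorHom_sum_tmul k y).symm,
    funext hk⟩

/-- **Equational criterion for flatness over semirings.**
If `M` is a flat module over a commutative semiring `A`, `v : Aⁿ → M` is a
homomorphism and `f, g : A → Aⁿ` satisfy `v ∘ f = v ∘ g`, then `v` factors through a
finite free module `Aᵐ` in which the relation `f = g` holds. -/
theorem stmt11 (A : Type) [CommSemiring A] (M : Type) [AddCommMonoid M] [Module A M]
    (hM : TensorFlat A M) (n : ℕ) (v : (Fin n → A) →ₗ[A] M)
    (f g : A →ₗ[A] (Fin n → A)) (hrel : v ∘ₗ f = v ∘ₗ g) :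
    ∃ (m : ℕ) (w : (Fin n → A) →ₗ[A] (Fin m → A)) (u : (Fin m → A) →ₗ[A] M),
      u ∘ₗ w = v ∧ w ∘ₗ f = w ∘ₗ g := by
  obtain ⟨s, rfl⟩ := dualTensorHom_bijective.2 v
  obtain ⟨m, w, u, huw, hw⟩ :=
    hM.exists_factor_eq_of_dualTensorHom_eq s (a := f 1) (b := g 1) (LinearMap.congr_fun hrel 1)
  exact ⟨m, w, u, huw, LinearMap.ext_ring hw⟩
end

section
/- Let A be a commutative semiring. Every finitely presented flat A-module is projective, and (Lazard) an A-module is flat if and only if it is a filtered colimit of finite free A-modules. -/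
open TensorProduct

/-- Projectivity: a retract of a free semimodule. -/
def IsProjSemimodule (A : Type) [CommSemiring A] (M : Type) [AddCommMonoid M]
    [Module A M] : Prop :=
  ∃ (I : Type) (s : M →ₗ[A] (I →₀ A)) (r : (I →₀ A) →ₗ[A] M), ∀ x, r (s x) = x

/-- Finite presentation: `M` is the coequalizer of a pair of maps between finite
free semimodules, i.e. the quotient of `Aⁿ` by the (additive, automatically
`A`-linear) congruence generated by the pairs `(f z, g z)`. -/
def IsFPSemimodule (A : Type) [CommSemiring A] (M : Type) [AddCommMonoid M]
    [Module A M] : Prop :=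
  ∃ (n m : ℕ) (f g : (Fin m → A) →ₗ[A] (Fin n → A)) (p : (Fin n → A) →ₗ[A] M),
    Function.Surjective p ∧
    ∀ x y : Fin n → A,
      p x = p y ↔ addConGen (fun u v => ∃ z, u = f z ∧ v = g z) x y

/-- `M` is a filtered colimit of finite free semimodules: there is a directed
system of finite free modules with compatible maps to `M` which is jointly
surjective and detects equality eventually. -/
def IsFilteredColimFinFree (A : Type) [CommSemiring A] (M : Type) [AddCommMonoid M]
    [Module A M] : Prop :=
  ∃ (ι : Type) (inst : Preorder ι), haveI := inst;
    Nonempty ι ∧ (∀ i j : ι, ∃ k, i ≤ k ∧ j ≤ k) ∧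
    ∃ (n : ι → ℕ)
      (T : ∀ i j : ι, i ≤ j → ((Fin (n i) → A) →ₗ[A] (Fin (n j) → A)))
      (c : ∀ i : ι, (Fin (n i) → A) →ₗ[A] M),
      (∀ (i : ι) (h : i ≤ i), T i i h = LinearMap.id) ∧
      (∀ (i j k : ι) (hij : i ≤ j) (hjk : j ≤ k),
        (T j k hjk) ∘ₗ (T i j hij) = T i k (le_trans hij hjk)) ∧
      (∀ (i j : ι) (hij : i ≤ j), (c j) ∘ₗ (T i j hij) = c i) ∧
      (∀ x : M, ∃ (i : ι) (y : Fin (n i) → A), c i y = x) ∧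
      (∀ (i : ι) (x y : Fin (n i) → A), c i x = c i y →
        ∃ (j : ι) (h : i ≤ j), T i j h x = T i j h y)

/-!
A flat `M` satisfies the equational criterion: if `u : Aⁿ → M` coequalizes `φ, ψ : Aᵐ → Aⁿ`,
then `u` factors through some `t : Aⁿ → Aᵏ` which already coequalizes `φ, ψ`. Indeed `u` is an
element of `(Aⁿ)* ⊗ M` equalized by `φ* ⊗ M` and `ψ* ⊗ M`, so by flatness it is a sum of
`κ ⊗ m` with `κ ∘ φ = κ ∘ ψ`, and `t` collects the `κ`. When `M` is the coequalizer `p` of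
`φ, ψ`, the map `t` descends along `p` to a section of `Aᵏ → M`, so `M` is projective.

Lazard: by the criterion, the finite free modules over a flat `M` form a filtered category with
colimit `M`; Deligne's trick (finite diagrams that contain a cocone over themselves, ordered by
inclusion) turns it into a directed preorder. Conversely `Aⁿ` is flat, `N ⊗ -` commutes with
directed colimits, and directed colimits commute with equalizers.
-/

section

variable {A : Type} [CommSemiring A] {M : Type} [AddCommMonoid M] [Module A M]

theorem TensorFlat.exists_factorization_of_comp_eq (hM : TensorFlat A M)
    {ι κ : Type} [Fintype ι] [DecidableEq ι] [Fintype κ] [DecidableEq κ]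
    (φ ψ : (κ → A) →ₗ[A] (ι → A)) (u : (ι → A) →ₗ[A] M) (hu : u ∘ₗ φ = u ∘ₗ ψ) :
    ∃ (k : ℕ) (t : (ι → A) →ₗ[A] (Fin k → A)) (v : (Fin k → A) →ₗ[A] M),
      v ∘ₗ t = u ∧ t ∘ₗ φ = t ∘ₗ ψ := by
  let eι := dualTensorHomEquivOfBasis (N := M) (Pi.basisFun A ι)
  let eκ := dualTensorHomEquivOfBasis (N := M) (Pi.basisFun A κ)
  have hdual : ∀ χ : (κ → A) →ₗ[A] (ι → A), eκ (χ.dualMap.rTensor M (eι.symm u)) = u ∘ₗ χ :=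
    fun χ => by
      rw [dualTensorHomEquivOfBasis_apply, ← LinearMap.comp_apply,
        dualTensorHom_comp_rTensor_dualMap, LinearMap.comp_apply,
        dualTensorHomEquivOfBasis_symm_cancel_right]
      rfl
  have hmem : eι.symm u ∈ LinearMap.eqLocus (φ.dualMap.rTensor M) (ψ.dualMap.rTensor M) :=
    eκ.injective (by rw [hdual, hdual, hu])
  rw [← (hM _ _ φ.dualMap ψ.dualMap).2] at hmem
  obtain ⟨ω, hω⟩ := hmem
  obtain ⟨k, ξ, m, rfl⟩ := TensorProduct.exists_sum_tmul_eq ω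
  refine ⟨k, LinearMap.pi fun s => (ξ s : Module.Dual A (ι → A)),
    Fintype.linearCombination A m, LinearMap.ext fun x => ?_,
    LinearMap.ext fun y => funext fun s => congrArg (fun χ => χ y) (ξ s).2⟩
  have := congrArg (fun w => dualTensorHom A (ι → A) M w x) hω
  simpa [eι, Fintype.linearCombination_apply, dualTensorHomEquivOfBasis_symm_cancel_right]
    using this

theorem TensorFlat.exists_factorization_of_apply_eq (hM : TensorFlat A M) {n : ℕ}
    (u : (Fin n → A) →ₗ[A] M) {x y : Fin n → A} (hxy : u x = u y) :
    ∃ (k : ℕ) (t : (Fin n → A) →ₗ[A] (Fin k → A)) (v : (Fin k → A) →ₗ[A] M),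
      v ∘ₗ t = u ∧ t x = t y := by
  let e : (Fin 1 → A) →ₗ[A] A := LinearMap.proj 0
  have hu : u ∘ₗ e.smulRight x = u ∘ₗ e.smulRight y := by
    ext
    simp [hxy]
  obtain ⟨k, t, v, hvt, ht⟩ := hM.exists_factorization_of_comp_eq _ _ u hu
  refine ⟨k, t, v, hvt, ?_⟩
  simpa [e] using LinearMap.congr_fun ht 1

theorem LinearMap.exists_comp_eq_of_surjective {X Y : Type} [AddCommMonoid X] [Module A X]
    [AddCommMonoid Y] [Module A Y] {p : X →ₗ[A] M} (hp : Function.Surjective p)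
    (t : X →ₗ[A] Y) (ht : ∀ x y, p x = p y → t x = t y) :
    ∃ s : M →ₗ[A] Y, s ∘ₗ p = t := by
  have hs : ∀ x, p (Function.surjInv hp x) = x := Function.surjInv_eq hp
  refine ⟨{ toFun := t ∘ Function.surjInv hp, map_add' := ?_, map_smul' := ?_ }, ?_⟩
  · intro x y
    simp only [Function.comp_apply, ← map_add]
    exact ht _ _ (by rw [map_add, hs, hs, hs])
  · intro r x
    simp only [Function.comp_apply, RingHom.id_apply, ← map_smul]
    exact ht _ _ (by rw [map_smul, hs, hs])
  · exact LinearMap.ext fun x => ht _ _ (hs (p x))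

theorem isProjSemimodule_of_comp_eq_id {k : ℕ} (s : M →ₗ[A] (Fin k → A))
    (r : (Fin k → A) →ₗ[A] M) (h : r ∘ₗ s = LinearMap.id) : IsProjSemimodule A M := by
  let e := Finsupp.linearEquivFunOnFinite A A (Fin k)
  exact ⟨Fin k, e.symm.toLinearMap ∘ₗ s, r ∘ₗ e.toLinearMap,
    fun x => by simpa using LinearMap.congr_fun h x⟩

theorem TensorFlat.isProjSemimodule (hM : TensorFlat A M) (hfp : IsFPSemimodule A M) :
    IsProjSemimodule A M := by
  obtain ⟨n, m, f, g, p, hp, hrel⟩ := hfp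
  have hpfg : p ∘ₗ f = p ∘ₗ g :=
    LinearMap.ext fun z => (hrel _ _).2 (AddConGen.Rel.of _ _ ⟨z, rfl, rfl⟩)
  obtain ⟨k, t, v, hvt, htfg⟩ := hM.exists_factorization_of_comp_eq f g p hpfg
  have ht : ∀ x y, p x = p y → t x = t y := by
    intro x y hxy
    refine (AddCon.addConGen_le (c := AddCon.ker t.toAddMonoidHom)).2 ?_ ((hrel x y).1 hxy)
    rintro _ _ ⟨z, rfl, rfl⟩
    exact LinearMap.congr_fun htfg z
  obtain ⟨s, hs⟩ := LinearMap.exists_comp_eq_of_surjective hp t ht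
  refine isProjSemimodule_of_comp_eq_id s v (LinearMap.ext fun x => ?_)
  obtain ⟨y, rfl⟩ := hp x
  simpa [← hs] using LinearMap.congr_fun hvt y

theorem LinearMap.rTensor_comp_eqLocus_subtype {N P : Type} [AddCommMonoid N] [Module A N]
    [AddCommMonoid P] [Module A P] (f g : N →ₗ[A] P) :
    f.rTensor M ∘ₗ (LinearMap.eqLocus f g).subtype.rTensor M =
      g.rTensor M ∘ₗ (LinearMap.eqLocus f g).subtype.rTensor M := by
  rw [← LinearMap.rTensor_comp, ← LinearMap.rTensor_comp]
  congr 1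
  exact LinearMap.ext fun x => x.2

theorem tensorFlat_of_eqLocus_le_range
    (h : ∀ (N P : Type) [AddCommMonoid N] [AddCommMonoid P] [Module A N] [Module A P]
      (f g : N →ₗ[A] P),
      Function.Injective ((LinearMap.eqLocus f g).subtype.rTensor M) ∧
      LinearMap.eqLocus (f.rTensor M) (g.rTensor M) ≤
        LinearMap.range ((LinearMap.eqLocus f g).subtype.rTensor M)) :
    TensorFlat A M := by
  intro N P _ _ _ _ f g
  refine ⟨(h N P f g).1, le_antisymm ?_ (h N P f g).2⟩
  rintro _ ⟨z, rfl⟩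
  exact LinearMap.congr_fun (LinearMap.rTensor_comp_eqLocus_subtype f g) z

theorem TensorProduct.piScalarRight_rTensor (ι : Type) [Fintype ι] [DecidableEq ι] {N P : Type}
    [AddCommMonoid N] [Module A N] [AddCommMonoid P] [Module A P] (h : N →ₗ[A] P)
    (z : N ⊗[A] (ι → A)) :
    piScalarRight A A P ι (h.rTensor _ z) = h ∘ piScalarRight A A N ι z := by
  induction z with
  | zero => ext; simp
  | tmul x y => ext; simp
  | add z z' hz hz' => ext; simp_all

theorem tensorFlat_pi (ι : Type) [Fintype ι] [DecidableEq ι] : TensorFlat A (ι → A) := by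
  refine tensorFlat_of_eqLocus_le_range fun N P _ _ _ _ f g => ⟨fun x y hxy => ?_, fun z hz => ?_⟩
  · apply (piScalarRight A A _ ι).injective
    have := congrArg (piScalarRight A A N ι) hxy
    rw [piScalarRight_rTensor, piScalarRight_rTensor] at this
    exact funext fun i => Subtype.ext (congrFun this i)
  · have hfg := congrArg (piScalarRight A A P ι) hz
    rw [piScalarRight_rTensor, piScalarRight_rTensor] at hfg
    refine ⟨(piScalarRight A A _ ι).symm fun i => ⟨piScalarRight A A N ι z i, congrFun hfg i⟩, ?_⟩
    apply (piScalarRight A A N ι).injective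
    rw [piScalarRight_rTensor, LinearEquiv.apply_symm_apply]
    rfl

theorem LinearMap.rTensor_lTensor_comm {N P X Y : Type} [AddCommMonoid N] [Module A N]
    [AddCommMonoid P] [Module A P] [AddCommMonoid X] [Module A X] [AddCommMonoid Y] [Module A Y]
    (f : N →ₗ[A] P) (g : X →ₗ[A] Y) (x : N ⊗[A] X) :
    f.rTensor Y (g.lTensor N x) = g.lTensor P (f.rTensor X x) := by
  rw [← LinearMap.comp_apply, LinearMap.rTensor_comp_lTensor, ← LinearMap.lTensor_comp_rTensor,
    LinearMap.comp_apply]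

theorem TensorFlat.of_linearEquiv {M' : Type} [AddCommMonoid M'] [Module A M']
    (e : M ≃ₗ[A] M') (hM : TensorFlat A M) : TensorFlat A M' := by
  refine tensorFlat_of_eqLocus_le_range fun N P _ _ _ _ f g => ⟨fun x y hxy => ?_, fun z hz => ?_⟩
  · obtain ⟨x, rfl⟩ := LinearMap.lTensor_surjective _ e.surjective x
    obtain ⟨y, rfl⟩ := LinearMap.lTensor_surjective _ e.surjective y
    simp only [LinearMap.rTensor_lTensor_comm] at hxy
    rw [(hM N P f g).1 ((e.lTensor N).injective hxy)]
  · obtain ⟨z, rfl⟩ := LinearMap.lTensor_surjective N e.surjective z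
    have hz' : z ∈ LinearMap.eqLocus (f.rTensor M) (g.rTensor M) := by
      rw [LinearMap.mem_eqLocus, LinearMap.rTensor_lTensor_comm,
        LinearMap.rTensor_lTensor_comm] at hz
      exact (e.lTensor P).injective hz
    rw [← (hM N P f g).2] at hz'
    obtain ⟨y, rfl⟩ := hz'
    exact ⟨e.toLinearMap.lTensor _ y, LinearMap.rTensor_lTensor_comm _ _ _⟩

end

namespace Module.DirectLimit

variable {A : Type} [CommSemiring A] {ι : Type} [Preorder ι] [DecidableEq ι]
  {G : ι → Type} [∀ i, AddCommMonoid (G i)] [∀ i, Module A (G i)]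
  {T : ∀ i j, i ≤ j → G i →ₗ[A] G j} {N : Type} [AddCommMonoid N] [Module A N]

theorem directLimitRight_lTensor_of {i : ι} (x : N ⊗[A] G i) :
    directLimitRight T N ((of A ι G T i).lTensor N x) =
      of A ι _ (fun _ _ h => (T _ _ h).lTensor N) i x := by
  induction x with
  | zero => simp
  | tmul n g => simp
  | add x y hx hy => simp only [map_add, hx, hy]

theorem lTensor_of_lTensor_f {i j : ι} (hij : i ≤ j) (x : N ⊗[A] G i) :
    (of A ι G T j).lTensor N ((T i j hij).lTensor N x) = (of A ι G T i).lTensor N x := by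
  rw [← LinearMap.lTensor_comp_apply]
  congr 2
  exact LinearMap.ext fun _ => of_f

variable [IsDirectedOrder ι]

theorem exists_lTensor_of₂ [Nonempty ι] (z w : N ⊗[A] DirectLimit G T) :
    ∃ i x y, (of A ι G T i).lTensor N x = z ∧ (of A ι G T i).lTensor N y = w := by
  obtain ⟨i, x, y, hx, hy⟩ := exists_of₂ (directLimitRight T N z) (directLimitRight T N w)
  refine ⟨i, x, y, ?_, ?_⟩ <;> apply (directLimitRight T N).injective
  · rw [directLimitRight_lTensor_of, hx]
  · rw [directLimitRight_lTensor_of, hy]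

theorem bijective_lift {M : Type} [AddCommMonoid M] [Module A M] (c : ∀ i, G i →ₗ[A] M)
    (hc : ∀ i j hij x, c j (T i j hij x) = c i x) (hsurj : ∀ x, ∃ i y, c i y = x)
    (hdet : ∀ i x y, c i x = c i y → ∃ j hij, T i j hij x = T i j hij y) :
    Function.Bijective (lift A ι G T c hc) := by
  refine ⟨fun z w hzw => ?_, fun x => ?_⟩
  · obtain ⟨i, -, -⟩ := hsurj 0
    have : Nonempty ι := ⟨i⟩
    obtain ⟨i, x, y, rfl, rfl⟩ := exists_of₂ z w
    rw [lift_of, lift_of] at hzw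
    obtain ⟨j, hij, hj⟩ := hdet i x y hzw
    rw [← of_f (hij := hij), hj, of_f]
  · obtain ⟨i, y, rfl⟩ := hsurj x
    exact ⟨of A ι G T i y, lift_of _ _ _⟩

variable [DirectedSystem G (T · · ·)]

theorem exists_lTensor_eq_of_lTensor_of_eq {i : ι} {x y : N ⊗[A] G i}
    (h : (of A ι G T i).lTensor N x = (of A ι G T i).lTensor N y) :
    ∃ j hij, (T i j hij).lTensor N x = (T i j hij).lTensor N y := by
  apply exists_eq_of_of_eq
  rw [← directLimitRight_lTensor_of, ← directLimitRight_lTensor_of, h]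

theorem _root_.TensorFlat.directLimit [Nonempty ι] (hG : ∀ i, TensorFlat A (G i)) :
    TensorFlat A (DirectLimit G T) := by
  refine tensorFlat_of_eqLocus_le_range fun N P _ _ _ _ f g => ⟨fun z w hzw => ?_, fun z hz => ?_⟩
  · obtain ⟨i, x, y, rfl, rfl⟩ := exists_lTensor_of₂ z w
    simp only [LinearMap.rTensor_lTensor_comm] at hzw
    obtain ⟨j, hij, hj⟩ := exists_lTensor_eq_of_lTensor_of_eq hzw
    simp only [← LinearMap.rTensor_lTensor_comm] at hj
    rw [← lTensor_of_lTensor_f hij x, ← lTensor_of_lTensor_f hij y, (hG j N P f g).1 hj]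
  · obtain ⟨i, x, -, rfl, -⟩ := exists_lTensor_of₂ z z
    rw [LinearMap.mem_eqLocus, LinearMap.rTensor_lTensor_comm,
      LinearMap.rTensor_lTensor_comm] at hz
    obtain ⟨j, hij, hj⟩ := exists_lTensor_eq_of_lTensor_of_eq hz
    simp only [← LinearMap.rTensor_lTensor_comm] at hj
    obtain ⟨y, hy⟩ := ((hG j N P f g).2.ge hj : _ ∈ LinearMap.range _)
    refine ⟨(of A ι G T j).lTensor _ y, ?_⟩
    rw [LinearMap.rTensor_lTensor_comm, hy, lTensor_of_lTensor_f]

end Module.DirectLimit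

theorem IsFilteredColimFinFree.tensorFlat {A : Type} [CommSemiring A] {M : Type}
    [AddCommMonoid M] [Module A M] (hM : IsFilteredColimFinFree A M) : TensorFlat A M := by
  classical
  obtain ⟨ι, _, _, hdir, n, T, c, hTid, hTcomp, hcT, hsurj, hdet⟩ := hM
  have : IsDirectedOrder ι := ⟨hdir⟩
  have : DirectedSystem (fun i => Fin (n i) → A) (T · · ·) :=
    ⟨fun i x => by rw [hTid]; rfl,
      fun k j i hij hjk x => LinearMap.congr_fun (hTcomp i j k hij hjk) x⟩
  have hc : ∀ i j hij x, c j (T i j hij x) = c i x :=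
    fun i j hij => LinearMap.congr_fun (hcT i j hij)
  exact (TensorFlat.directLimit fun i => tensorFlat_pi (Fin (n i))).of_linearEquiv
    (LinearEquiv.ofBijective _ (Module.DirectLimit.bijective_lift c hc hsurj hdet))

namespace Lazard

variable (A : Type) [CommSemiring A] (M : Type) [AddCommMonoid M] [Module A M]

/-- The tag only serves to produce objects outside a given finite set
(`exists_isCocone_not_mem`). -/
structure Obj where
  tag : ℕ
  rank : ℕ
  toM : (Fin rank → A) →ₗ[A] M

structure Arrow where
  src : Obj A M
  tgt : Obj A M
  map : (Fin src.rank → A) →ₗ[A] (Fin tgt.rank → A)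
  toM_comp : tgt.toM ∘ₗ map = src.toM

variable {A M}

def objs (S : Set (Arrow A M)) : Set (Obj A M) := Arrow.src '' S ∪ Arrow.tgt '' S

theorem src_mem_objs {S : Set (Arrow A M)} {f : Arrow A M} (hf : f ∈ S) : f.src ∈ objs S :=
  Or.inl ⟨f, hf, rfl⟩

theorem tgt_mem_objs {S : Set (Arrow A M)} {f : Arrow A M} (hf : f ∈ S) : f.tgt ∈ objs S :=
  Or.inr ⟨f, hf, rfl⟩

theorem objs_mono {S S' : Set (Arrow A M)} (h : S ⊆ S') : objs S ⊆ objs S' :=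
  Set.union_subset_union (Set.image_mono h) (Set.image_mono h)

theorem finite_objs {S : Set (Arrow A M)} (hS : S.Finite) : (objs S).Finite :=
  (hS.image _).union (hS.image _)

def IsCocone (S : Set (Arrow A M)) (w : Obj A M)
    (leg : ∀ a : Obj A M, (Fin a.rank → A) →ₗ[A] (Fin w.rank → A)) : Prop :=
  (∀ a ∈ objs S, w.toM ∘ₗ leg a = a.toM) ∧ ∀ f ∈ S, leg f.tgt ∘ₗ f.map = leg f.src

theorem exists_legs {O : Set (Obj A M)} (hO : O.Finite) :
    ∃ (w : Obj A M) (leg : ∀ a : Obj A M, (Fin a.rank → A) →ₗ[A] (Fin w.rank → A)),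
      ∀ a ∈ O, w.toM ∘ₗ leg a = a.toM := by
  classical
  induction O, hO using Set.Finite.induction_on with
  | empty => exact ⟨⟨0, 0, 0⟩, fun _ => 0, by simp⟩
  | @insert a O _ _ ih =>
    obtain ⟨w, leg, hleg⟩ := ih
    let e : (Fin (a.rank + w.rank) → A) ≃ₗ[A] (Fin a.rank → A) × (Fin w.rank → A) :=
      LinearEquiv.funCongrLeft A A finSumFinEquiv ≪≫ₗ LinearEquiv.sumArrowLequivProdArrow _ _ A A
    refine ⟨⟨0, a.rank + w.rank, a.toM.coprod w.toM ∘ₗ e.toLinearMap⟩,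
      Function.update (fun b => e.symm.toLinearMap ∘ₗ LinearMap.inr A _ _ ∘ₗ leg b) a
        (e.symm.toLinearMap ∘ₗ LinearMap.inl A _ _), fun b hb => ?_⟩
    by_cases hba : b = a
    · subst hba
      ext
      simp
    · rw [Function.update_of_ne hba, ← hleg b (hb.resolve_left hba)]
      ext
      simp

theorem exists_isCocone (hM : TensorFlat A M) {S : Set (Arrow A M)} (hS : S.Finite) :
    ∃ (w : Obj A M) (leg : ∀ a : Obj A M, (Fin a.rank → A) →ₗ[A] (Fin w.rank → A)),
      IsCocone S w leg := by
  obtain ⟨w₀, leg₀, hleg₀⟩ := exists_legs (finite_objs hS)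
  refine Set.Finite.induction_on_subset (motive := fun T _ => ∃ (w : Obj A M)
      (leg : ∀ a : Obj A M, (Fin a.rank → A) →ₗ[A] (Fin w.rank → A)),
      (∀ a ∈ objs S, w.toM ∘ₗ leg a = a.toM) ∧ ∀ f ∈ T, leg f.tgt ∘ₗ f.map = leg f.src)
    S hS ⟨w₀, leg₀, hleg₀, by simp⟩ ?_
  rintro f T hf - - ⟨w, leg, hleg, hT⟩
  have hu : w.toM ∘ₗ (leg f.tgt ∘ₗ f.map) = w.toM ∘ₗ leg f.src := by
    rw [← LinearMap.comp_assoc, hleg _ (tgt_mem_objs hf), f.toM_comp, hleg _ (src_mem_objs hf)]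
  obtain ⟨k, t, v, hvt, ht⟩ := hM.exists_factorization_of_comp_eq _ _ _ hu
  refine ⟨⟨0, k, v⟩, fun a => t ∘ₗ leg a, fun a ha => ?_, ?_⟩
  · rw [← LinearMap.comp_assoc, hvt, hleg a ha]
  · rintro g (rfl | hg)
    · rw [LinearMap.comp_assoc, ht]
    · rw [LinearMap.comp_assoc, hT g hg]

theorem exists_isCocone_not_mem (hM : TensorFlat A M) {S : Set (Arrow A M)} (hS : S.Finite) :
    ∃ (w : Obj A M) (leg : ∀ a : Obj A M, (Fin a.rank → A) →ₗ[A] (Fin w.rank → A)),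
      IsCocone S w leg ∧ w ∉ objs S := by
  obtain ⟨w, leg, hc⟩ := exists_isCocone hM hS
  obtain ⟨τ, hτ⟩ := ((finite_objs hS).image Obj.tag).infinite_compl.nonempty
  exact ⟨{ w with tag := τ }, leg, hc, fun hw => hτ ⟨_, hw, rfl⟩⟩

variable (A M) in
/-- The index of Lazard's theorem (Deligne's trick): finite diagrams carrying a cocone whose apex
belongs to the diagram and receives all legs as arrows, ordered by inclusion of diagrams. -/
structure Stage where
  arrows : Set (Arrow A M)
  finite : arrows.Finite
  apex : Obj A M
  leg : ∀ a : Obj A M, (Fin a.rank → A) →ₗ[A] (Fin apex.rank → A)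
  isCocone : IsCocone arrows apex leg
  apex_mem : apex ∈ objs arrows
  leg_apex : leg apex = LinearMap.id
  legArrow_mem : ∀ a (ha : a ∈ objs arrows), ⟨a, apex, leg a, isCocone.1 a ha⟩ ∈ arrows

instance : Preorder (Stage A M) := Preorder.lift Stage.arrows

theorem exists_stage_of_isCocone {S : Set (Arrow A M)} (hS : S.Finite) {w : Obj A M}
    {leg : ∀ a : Obj A M, (Fin a.rank → A) →ₗ[A] (Fin w.rank → A)} (hc : IsCocone S w leg)
    (hw : w ∉ objs S) : ∃ p : Stage A M, S ⊆ p.arrows := by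
  classical
  -- Since `w` is fresh, its leg can be reset to the identity without touching the others.
  let leg' := Function.update leg w LinearMap.id
  have hleg' : ∀ a ∈ objs S, leg' a = leg a := fun a ha =>
    Function.update_of_ne (ne_of_mem_of_not_mem ha hw) _ _
  let legArrow : objs S → Arrow A M := fun a => ⟨a, w, leg a, hc.1 a a.2⟩
  let idArrow : Arrow A M := ⟨w, w, LinearMap.id, LinearMap.comp_id _⟩
  let S' := insert idArrow (S ∪ Set.range legArrow)
  have hobjs : objs S' ⊆ insert w (objs S) := by
    rintro _ (⟨f, hf, rfl⟩ | ⟨f, hf, rfl⟩) <;>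
      rcases hf with rfl | hf | ⟨a, rfl⟩ <;> simp [idArrow, legArrow, src_mem_objs, tgt_mem_objs, *]
  have : Finite (objs S) := finite_objs hS
  refine ⟨⟨S', (hS.union (Set.finite_range legArrow)).insert idArrow, w, leg', ⟨?_, ?_⟩,
    tgt_mem_objs (Set.mem_insert _ _), Function.update_self .., ?_⟩, fun f hf => Or.inr (Or.inl hf)⟩
  · intro a ha
    rcases hobjs ha with rfl | ha
    · simp [leg']
    · rw [hleg' a ha, hc.1 a ha]
  · rintro f (rfl | hf | ⟨a, rfl⟩)
    · simp [idArrow]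
    · rw [hleg' _ (src_mem_objs hf), hleg' _ (tgt_mem_objs hf), hc.2 f hf]
    · simp [legArrow, leg', hleg' a a.2]
  · intro a ha
    rcases hobjs ha with rfl | ha
    · simp [leg', idArrow, S']
    · simp only [hleg' a ha, S']
      exact Or.inr (Or.inr ⟨⟨a, ha⟩, rfl⟩)

theorem exists_stage (hM : TensorFlat A M) {S : Set (Arrow A M)} (hS : S.Finite) :
    ∃ p : Stage A M, S ⊆ p.arrows := by
  obtain ⟨w, leg, hc, hw⟩ := exists_isCocone_not_mem hM hS
  exact exists_stage_of_isCocone hS hc hw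

namespace Stage

variable {p q r : Stage A M}

theorem apex_mem_objs (h : p ≤ q) : p.apex ∈ objs q.arrows := objs_mono h p.apex_mem

theorem apex_toM_comp_leg (h : p ≤ q) : q.apex.toM ∘ₗ q.leg p.apex = p.apex.toM :=
  q.isCocone.1 _ (apex_mem_objs h)

theorem leg_comp_leg (hpq : p ≤ q) (hqr : q ≤ r) :
    r.leg q.apex ∘ₗ q.leg p.apex = r.leg p.apex :=
  r.isCocone.2 _ (hqr (q.legArrow_mem _ (apex_mem_objs hpq)))

theorem exists_apex_toM_eq (hM : TensorFlat A M) (x : M) :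
    ∃ (p : Stage A M) (y : Fin p.apex.rank → A), p.apex.toM y = x := by
  let a : Obj A M := ⟨0, 1, (LinearMap.proj 0 : (Fin 1 → A) →ₗ[A] A).smulRight x⟩
  let idArrow : Arrow A M := ⟨a, a, LinearMap.id, LinearMap.comp_id _⟩
  obtain ⟨p, hp⟩ := exists_stage hM (Set.finite_singleton idArrow)
  refine ⟨p, p.leg a 1, ?_⟩
  rw [← LinearMap.comp_apply, p.isCocone.1 a (src_mem_objs (hp rfl))]
  simp [a]

theorem exists_le_leg_apply_eq (hM : TensorFlat A M) (p : Stage A M)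
    {x y : Fin p.apex.rank → A} (hxy : p.apex.toM x = p.apex.toM y) :
    ∃ (q : Stage A M) (_ : p ≤ q), q.leg p.apex x = q.leg p.apex y := by
  obtain ⟨k, t, v, hvt, ht⟩ := hM.exists_factorization_of_apply_eq _ hxy
  let f : Arrow A M := ⟨p.apex, ⟨0, k, v⟩, t, hvt⟩
  obtain ⟨q, hq⟩ := exists_stage hM (p.finite.insert f)
  refine ⟨q, (Set.subset_insert f _).trans hq, ?_⟩
  rw [← q.isCocone.2 f (hq (Set.mem_insert f _)), LinearMap.comp_apply, LinearMap.comp_apply, ht]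

end Stage

end Lazard

theorem TensorFlat.isFilteredColimFinFree {A : Type} [CommSemiring A] {M : Type}
    [AddCommMonoid M] [Module A M] (hM : TensorFlat A M) : IsFilteredColimFinFree A M := by
  obtain ⟨p₀, -⟩ := Lazard.exists_stage hM (Set.finite_empty (α := Lazard.Arrow A M))
  refine ⟨Lazard.Stage A M, inferInstance, ⟨p₀⟩, fun p q => ?_, fun p => p.apex.rank,
    fun p q _ => q.leg p.apex, fun p => p.apex.toM, fun p _ => p.leg_apex,
    fun _ _ _ => Lazard.Stage.leg_comp_leg, fun _ _ => Lazard.Stage.apex_toM_comp_leg,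
    Lazard.Stage.exists_apex_toM_eq hM, Lazard.Stage.exists_le_leg_apply_eq hM⟩
  obtain ⟨r, hr⟩ := Lazard.exists_stage hM (p.finite.union q.finite)
  exact ⟨r, Set.subset_union_left.trans hr, Set.subset_union_right.trans hr⟩

/-- Over a commutative semiring, every finitely presented flat
semimodule is projective, and (Lazard) a semimodule is flat iff it is a filtered
colimit of finite free semimodules. -/
theorem stmt12 (A : Type) [CommSemiring A] (M : Type) [AddCommMonoid M]
    [Module A M] :
    (IsFPSemimodule A M → TensorFlat A M → IsProjSemimodule A M) ∧
    (TensorFlat A M ↔ IsFilteredColimFinFree A M) :=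
  ⟨fun hfp hM => hM.isProjSemimodule hfp,
    TensorFlat.isFilteredColimFinFree, IsFilteredColimFinFree.tensorFlat⟩
end

section
/- Let (M, ≤) be a partially ordered module over a monoid pair (A;A⁺), where M is a direct sum of cyclic A-modules. Then (M,≤) is lower saturated (fD is a lower submodule whenever D is, for all f ∈ A) if and only if the partial order on M is presented by a quiver representation: there is a quiver Q on the index set of cyclic factors with an A-linear map attached to each edge, such that x ≤ y iff x = γy for some A⁺-multiple γ of a path in Q. -/
/-- Let `(M,≤)` be a partially ordered module over a monoid pair
`(A;A⁺)` (with `A⁺` sharp), where `M = ⊕_{i∈I} A` is a direct sum of cyclic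
`A`-modules, modelled as `I × A` with action `a • (i,b) = (i, a*b)`.  Then `(M,≤)`
is lower saturated (the translate `f•D` of a lower `A⁺`-submodule `D` is lower, for
every `f ∈ A`) iff the partial order is presented by a quiver representation:
there is a quiver on `I` with an element of `A` attached to each edge such that
`x ≤ y` iff `x` is an `A⁺`-multiple of the image of `y` under some path. -/
theorem stmt15 (A : Type) [CommMonoid A] (Ap : Submonoid A)
    (hsharp : ∀ u ∈ Ap, (∃ v ∈ Ap, u * v = 1) → u = 1)
    (I : Type) (le : I × A → I × A → Prop)
    (hrefl : ∀ x, le x x)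
    (htrans : ∀ x y z, le x y → le y z → le x z)
    (hantisymm : ∀ x y, le x y → le y x → x = y)
    (hdiv : ∀ (x : I × A), ∀ h ∈ Ap, le (x.1, h * x.2) x)
    (hmono : ∀ (a : A) (x y : I × A), le x y → le (x.1, a * x.2) (y.1, a * y.2)) :
    -- lower saturation
    (∀ D : Set (I × A),
      (∀ h ∈ Ap, ∀ x ∈ D, (x.1, h * x.2) ∈ D) →
      (∀ x y : I × A, le x y → y ∈ D → x ∈ D) →
      ∀ f : A, ∀ x y : I × A, le x y →
        y ∈ (fun z : I × A => (z.1, f * z.2)) '' D →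
        x ∈ (fun z : I × A => (z.1, f * z.2)) '' D) ↔
    -- presentation by a quiver
    (∃ (E : Type) (src tgt : E → I) (lab : E → A),
      ∀ x y : I × A, le x y ↔
        ∃ z : I × A,
          Relation.ReflTransGen
            (fun u v : I × A => ∃ e : E, v.1 = src e ∧ u = (tgt e, lab e * v.2)) z y ∧
          ∃ h ∈ Ap, x = (z.1, h * z.2)) := by
  constructor
  · -- saturation → quiver presentation
    intro sat
    refine ⟨{p : (I × A) × I // le p.1 (p.2, (1:A))}, fun e => e.1.2, fun e => e.1.1.1,
      fun e => e.1.1.2, fun x y => ?_⟩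
    constructor
    · intro hxy
      have hy : y ∈ (fun z : I × A => (z.1, y.2 * z.2)) '' {u | le u (y.1, 1)} :=
        ⟨(y.1, 1), hrefl _, by simp⟩
      obtain ⟨w, hw, hwx⟩ := sat {u | le u (y.1, 1)}
        (fun h hh u hu => htrans _ _ _ (hdiv u h hh) hu)
        (fun a b hab hb => htrans _ _ _ hab hb) y.2 x y hxy hy
      refine ⟨(w.1, w.2 * y.2),
        Relation.ReflTransGen.single ⟨⟨(w, y.1), hw⟩, rfl, rfl⟩, 1, Ap.one_mem, ?_⟩
      rw [← hwx]
      simp [mul_comm]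
    · rintro ⟨z, hz, h, hh, hx⟩
      have hzy : le z y := by
        clear hx
        induction hz with
        | refl => exact hrefl _
        | @tail m c _ hstep ih =>
          obtain ⟨e, he1, he2⟩ := hstep
          simp only at he1 he2
          refine htrans _ _ _ ih ?_
          have := hmono c.2 e.1.1 (e.1.2, 1) e.2
          rw [he2]
          have hc : c = (e.1.2, c.2 * 1) := by rw [mul_one, ← he1]
          rw [hc]
          simpa [mul_comm] using this
      rw [hx]
      exact htrans _ _ _ (hdiv z h hh) hzy
  · -- quiver presentation → saturation
    rintro ⟨E, src, tgt, lab, P⟩ D hD1 hD2 f x y hxy hy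
    obtain ⟨w, hwD, hwy⟩ := hy
    obtain ⟨z, hz, h, hh, hx⟩ := (P x y).1 hxy
    -- scaling lemma
    have key : ∀ u v : I × A,
        Relation.ReflTransGen
          (fun u v : I × A => ∃ e : E, v.1 = src e ∧ u = (tgt e, lab e * v.2)) u v →
        ∃ g : A, u.2 = g * v.2 ∧ ∀ b : A,
          Relation.ReflTransGen
            (fun u v : I × A => ∃ e : E, v.1 = src e ∧ u = (tgt e, lab e * v.2))
            (u.1, g * b) (v.1, b) := by
      intro u v huv
      induction huv with
      | refl => exact ⟨1, by simp, fun b => by rw [one_mul]⟩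
      | @tail m c _ hstep ih =>
        obtain ⟨g, hg, hp⟩ := ih
        obtain ⟨e, he1, he2⟩ := hstep
        refine ⟨g * lab e, ?_, fun b => ?_⟩
        · rw [hg, he2, mul_assoc]
        · have step1 : (fun u v : I × A => ∃ e : E, v.1 = src e ∧ u = (tgt e, lab e * v.2))
              (m.1, lab e * b) (c.1, b) := ⟨e, he1, by rw [he2]⟩
          have := hp (lab e * b)
          rw [mul_assoc]
          exact this.tail step1
    obtain ⟨g, hg, hp⟩ := key z y hz
    have hyw1 : y.1 = w.1 := by rw [← hwy]
    have hyw2 : y.2 = f * w.2 := by rw [← hwy]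
    have hreach : Relation.ReflTransGen
        (fun u v : I × A => ∃ e : E, v.1 = src e ∧ u = (tgt e, lab e * v.2))
        (z.1, g * w.2) w := by
      have := hp w.2
      rwa [hyw1] at this
    have hle : le (z.1, g * w.2) w :=
      (P (z.1, g * w.2) w).2 ⟨(z.1, g * w.2), hreach, 1, Ap.one_mem, by simp⟩
    have hmem : (z.1, g * w.2) ∈ D := hD2 _ _ hle hwD
    have hmem2 : (z.1, h * (g * w.2)) ∈ D := hD1 h hh _ hmem
    refine ⟨(z.1, h * (g * w.2)), hmem2, ?_⟩
    rw [hx]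
    have : z.2 = g * (f * w.2) := by rw [hg, hyw2]
    rw [this]
    simp [mul_comm, mul_left_comm, mul_assoc]
end

section
/- Let (A; A⁺) be an F₁-domain: A⁺∖{0} cancellative, A a localisation of A⁺, A⁺ sharp and integrally closed in A. Let (M,≤) be a lower saturated partially ordered free A-module that is finitely presented (presented by a finite quiver). If the induced order on each cyclic factor of M is the A⁺-divisibility order (non-degeneracy), then (M,≤) is lower finite: the lower hull of every finitely generated A⁺-submodule is finitely generated. Conversely, if (M,≤) is lower finite then it is non-degenerate. -/
/-!
Unwinding the finite presentation, `x ≤ y` means that `x` is an `A⁺`-multiple of the transport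
of `y` along a path of the quiver, i.e. of `y` multiplied by the product of the edge labels.
Non-degeneracy then says exactly that every cycle has its label in `A⁺`. In that case cycles can
be cut out of paths at the cost of an `A⁺`-factor, so by pigeonhole the lower hull of a finite
set is generated by its transports along the finitely many paths of length at most `|I|`.
Conversely, if a cycle at `j` has label `p`, all `(j, pⁿ)` lie below `(j, 1)`; lower finiteness
puts them in a finitely generated `A⁺`-submodule, and integral closedness gives `p ∈ A⁺`.
-/

namespace QuiverOrder

variable {E I A : Type}

def IsPath (src tgt : E → I) : I → List E → I → Prop
  | i, [], j => i = j
  | i, e :: l, j => src e = i ∧ IsPath src tgt (tgt e) l j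

def pathEnd (tgt : E → I) : I → List E → I
  | i, [] => i
  | _, e :: l => pathEnd tgt (tgt e) l

section Paths

variable {src tgt : E → I}

theorem isPath_append_iff {i j : I} {l₁ l₂ : List E} :
    IsPath src tgt i (l₁ ++ l₂) j ↔
      ∃ m, IsPath src tgt i l₁ m ∧ IsPath src tgt m l₂ j := by
  induction l₁ generalizing i with
  | nil => simp [IsPath]
  | cons e l ih => simp [IsPath, ih, and_assoc]

theorem IsPath.pathEnd_eq {i j : I} {l : List E} (h : IsPath src tgt i l j) :
    pathEnd tgt i l = j := by
  induction l generalizing i with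
  | nil => exact h
  | cons e l ih => exact ih h.2

theorem IsPath.append {i m j : I} {l₁ l₂ : List E} (h₁ : IsPath src tgt i l₁ m)
    (h₂ : IsPath src tgt m l₂ j) : IsPath src tgt i (l₁ ++ l₂) j :=
  isPath_append_iff.mpr ⟨m, h₁, h₂⟩

theorem IsPath.flatten_replicate {j : I} {l : List E} (h : IsPath src tgt j l j) (n : ℕ) :
    IsPath src tgt j (List.replicate n l).flatten j := by
  induction n with
  | zero => rfl
  | succ n ih => exact h.append ih

theorem IsPath.take_drop {i j : I} {l : List E} (h : IsPath src tgt i l j) (k : ℕ) :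
    IsPath src tgt i (l.take k) (pathEnd tgt i (l.take k)) ∧
      IsPath src tgt (pathEnd tgt i (l.take k)) (l.drop k) j := by
  rw [← List.take_append_drop k l, isPath_append_iff] at h
  obtain ⟨m, h₁, h₂⟩ := h
  rw [h₁.pathEnd_eq]
  exact ⟨h₁, h₂⟩

theorem IsPath.exists_cycle_of_pathEnd_take_eq {i j : I} {l : List E}
    (h : IsPath src tgt i l j) {p q : ℕ} (hpq : p < q) (hq : q ≤ l.length)
    (hend : pathEnd tgt i (l.take p) = pathEnd tgt i (l.take q)) :
    ∃ l₁ l₂ l₃ m, l = l₁ ++ l₂ ++ l₃ ∧ l₂ ≠ [] ∧ IsPath src tgt i l₁ m ∧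
      IsPath src tgt m l₂ m ∧ IsPath src tgt m l₃ j := by
  have htake : l.take p ++ (l.take q).drop p = l.take q := by
    conv_rhs => rw [← List.take_append_drop p (l.take q)]
    rw [List.take_take, min_eq_left hpq.le]
  obtain ⟨hq₁, hq₂⟩ := h.take_drop q
  have hsplit : IsPath src tgt i (l.take p ++ (l.take q).drop p) (pathEnd tgt i (l.take q)) := by
    rwa [htake]
  obtain ⟨m, hp₁, hcyc⟩ := isPath_append_iff.mp hsplit
  obtain rfl : pathEnd tgt i (l.take p) = m := hp₁.pathEnd_eq
  refine ⟨l.take p, (l.take q).drop p, l.drop q, _, ?_, ?_, hp₁, hend ▸ hcyc,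
    hend ▸ hq₂⟩
  · rw [htake, List.take_append_drop]
  · rw [← List.length_pos_iff, List.length_drop, List.length_take]
    omega

theorem IsPath.exists_cycle [Finite I] {i j : I} {l : List E} (h : IsPath src tgt i l j)
    (hlen : Nat.card I < l.length) :
    ∃ l₁ l₂ l₃ m, l = l₁ ++ l₂ ++ l₃ ∧ l₂ ≠ [] ∧ IsPath src tgt i l₁ m ∧
      IsPath src tgt m l₂ m ∧ IsPath src tgt m l₃ j := by
  let f : Fin (l.length + 1) → I := fun k => pathEnd tgt i (l.take k)
  obtain ⟨a, b, hab, hfab⟩ : ∃ a b, a < b ∧ f a = f b := by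
    by_contra! hinj
    have := Nat.card_le_card_of_injective f fun a b hfab => by
      by_contra hne
      rcases lt_or_gt_of_ne hne with hlt | hlt
      exacts [hinj a b hlt hfab, hinj b a hlt hfab.symm]
    rw [Nat.card_fin] at this
    omega
  exact h.exists_cycle_of_pathEnd_take_eq hab (Nat.lt_succ_iff.mp b.isLt) hfab

end Paths

section Labels

def QuiverStep [CommMonoid A] (src tgt : E → I) (lab : E → A) (u v : I × A) : Prop :=
  ∃ e, v.1 = src e ∧ u = (tgt e, lab e * v.2)

def QuiverLE [CommMonoid A] (src tgt : E → I) (lab : E → A) (Ap : Submonoid A)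
    (x y : I × A) : Prop :=
  ∃ l, IsPath src tgt y.1 l x.1 ∧ ∃ c ∈ Ap, x.2 = c * ((l.map lab).prod * y.2)

def LowerFinite [CommMonoid A] (Ap : Submonoid A) (le : I × A → I × A → Prop) : Prop :=
  ∀ F : Finset (I × A), ∃ G : Finset (I × A),
    {x : I × A | ∃ h ∈ Ap, ∃ g ∈ F, le x (g.1, h * g.2)} =
      {x : I × A | ∃ h ∈ Ap, ∃ g ∈ G, x = (g.1, h * g.2)}

variable [CommMonoid A] {src tgt : E → I} (lab : E → A) (Ap : Submonoid A)

theorem IsPath.exists_short [Finite I]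
    (hcyc : ∀ j l, IsPath src tgt j l j → (l.map lab).prod ∈ Ap) {i j : I} {l : List E}
    (h : IsPath src tgt i l j) :
    ∃ l', l'.length ≤ Nat.card I ∧ IsPath src tgt i l' j ∧
      ∃ c ∈ Ap, (l.map lab).prod = c * (l'.map lab).prod := by
  induction hn : l.length using Nat.strong_induction_on generalizing l with
  | _ n ih =>
    by_cases hlen : l.length ≤ Nat.card I
    · exact ⟨l, hlen, h, 1, Ap.one_mem, (one_mul _).symm⟩
    obtain ⟨l₁, l₂, l₃, m, rfl, hne, h₁, h₂, h₃⟩ := h.exists_cycle (not_le.mp hlen)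
    have hshorter : (l₁ ++ l₃).length < n := by
      rw [← hn]
      simp only [List.length_append]
      have := List.length_pos_iff.mpr hne
      omega
    obtain ⟨l', hl', hp', c, hc, hlab⟩ := ih _ hshorter (h₁.append h₃) rfl
    refine ⟨l', hl', hp', (l₂.map lab).prod * c, Ap.mul_mem (hcyc m l₂ h₂) hc, ?_⟩
    simp only [List.map_append, List.prod_append] at hlab ⊢
    rw [mul_assoc _ c, ← hlab]
    ac_rfl

theorem reflTransGen_quiverStep_iff {y z : I × A} :
    Relation.ReflTransGen (QuiverStep src tgt lab) z y ↔
      ∃ l, IsPath src tgt y.1 l z.1 ∧ z.2 = (l.map lab).prod * y.2 := by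
  constructor
  · intro hz
    induction hz using Relation.ReflTransGen.head_induction_on with
    | refl => exact ⟨[], rfl, by simp⟩
    | head hstep _ ih =>
      obtain ⟨l, hp, hlab⟩ := ih
      obtain ⟨e, hsrc, rfl⟩ := hstep
      refine ⟨l ++ [e], hp.append ⟨hsrc.symm, rfl⟩, ?_⟩
      simp only [hlab, List.map_append, List.prod_append, List.map_singleton, List.prod_singleton]
      ac_rfl
  · rintro ⟨l, hp, hlab⟩
    induction l generalizing y with
    | nil =>
      obtain ⟨z₁, z₂⟩ := z
      obtain rfl : y.1 = z₁ := hp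
      obtain rfl : z₂ = y.2 := by simpa using hlab
      rfl
    | cons e l ih =>
      refine Relation.ReflTransGen.tail (ih hp.2 ?_) ⟨e, hp.1.symm, rfl⟩
      simp [hlab, mul_assoc, mul_left_comm]

theorem exists_reflTransGen_quiverStep_iff {x y : I × A} :
    (∃ z, Relation.ReflTransGen (QuiverStep src tgt lab) z y ∧
        ∃ c ∈ Ap, x = (z.1, c * z.2)) ↔
      QuiverLE src tgt lab Ap x y := by
  simp only [reflTransGen_quiverStep_iff, QuiverLE]
  constructor
  · rintro ⟨z, ⟨l, hp, hz⟩, c, hc, rfl⟩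
    exact ⟨l, hp, c, hc, hz ▸ rfl⟩
  · rintro ⟨l, hp, c, hc, hx⟩
    exact ⟨(x.1, (l.map lab).prod * y.2), ⟨l, hp, rfl⟩, c, hc, by rw [← hx]⟩

theorem quiverLE_nondegenerate_iff_cycle_prod_mem :
    (∀ i a b, QuiverLE src tgt lab Ap (i, a) (i, b) ↔ ∃ c ∈ Ap, a = c * b) ↔
      ∀ j l, IsPath src tgt j l j → (l.map lab).prod ∈ Ap := by
  constructor
  · intro hnd j l hl
    obtain ⟨c, hc, hlab⟩ := (hnd j (l.map lab).prod 1).mp ⟨l, hl, 1, Ap.one_mem, by simp⟩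
    rw [mul_one] at hlab
    exact hlab ▸ hc
  · intro hcyc i a b
    constructor
    · rintro ⟨l, hl, c, hc, rfl⟩
      exact ⟨c * (l.map lab).prod, Ap.mul_mem hc (hcyc i l hl), (mul_assoc _ _ _).symm⟩
    · rintro ⟨c, hc, rfl⟩
      exact ⟨[], rfl, c, hc, by simp⟩

theorem lowerFinite_quiverLE_of_cycle_prod_mem [Finite E] [Finite I]
    (hcyc : ∀ j l, IsPath src tgt j l j → (l.map lab).prod ∈ Ap) :
    LowerFinite Ap (QuiverLE src tgt lab Ap) := by
  intro F
  let S : Set ((I × A) × List E × I) :=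
    {p | p.1 ∈ F ∧ p.2.1.length ≤ Nat.card I ∧ IsPath src tgt p.1.1 p.2.1 p.2.2}
  have hS : S.Finite :=
    (F.finite_toSet.prod ((List.finite_length_le E _).prod Set.finite_univ)).subset
      fun p hp => ⟨hp.1, hp.2.1, trivial⟩
  refine ⟨(hS.image fun p => (p.2.2, (p.2.1.map lab).prod * p.1.2)).toFinset, ?_⟩
  ext x
  simp only [Set.mem_ofPred_eq, Set.Finite.mem_toFinset, Set.mem_image]
  constructor
  · rintro ⟨c, hc, g, hg, l, hl, c', hc', hx⟩
    obtain ⟨l', hl', hp', c'', hc'', hlab⟩ := hl.exists_short lab Ap hcyc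
    refine ⟨c' * c'' * c, Ap.mul_mem (Ap.mul_mem hc' hc'') hc, _,
      ⟨(g, l', x.1), ⟨hg, hl', hp'⟩, rfl⟩, ?_⟩
    ext
    · rfl
    · simp only [hx, hlab]
      ac_rfl
  · rintro ⟨c, hc, _, ⟨⟨g, l, j⟩, ⟨hg, -, hl⟩, rfl⟩, rfl⟩
    exact ⟨1, Ap.one_mem, g, hg, l, hl, c, hc, by simp⟩

theorem IsPath.prod_mem_of_lowerFinite
    (hic : ∀ f : A,
      (∃ K : Finset A, ∀ n : ℕ, ∃ k ∈ K, ∃ h ∈ Ap, f ^ n = h * k) → f ∈ Ap)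
    (hlf : LowerFinite Ap (QuiverLE src tgt lab Ap)) {j : I} {l : List E}
    (hl : IsPath src tgt j l j) : (l.map lab).prod ∈ Ap := by
  classical
  obtain ⟨G, hG⟩ := hlf {(j, 1)}
  refine hic _ ⟨G.image Prod.snd, fun n => ?_⟩
  have hmem : (j, (l.map lab).prod ^ n) ∈
      {x : I × A | ∃ h ∈ Ap, ∃ g ∈ ({(j, 1)} : Finset (I × A)),
        QuiverLE src tgt lab Ap x (g.1, h * g.2)} :=
    ⟨1, Ap.one_mem, (j, 1), Finset.mem_singleton_self _, (List.replicate n l).flatten,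
      hl.flatten_replicate n, 1, Ap.one_mem, by simp⟩
  rw [hG] at hmem
  obtain ⟨c, hc, g, hg, hx⟩ := hmem
  exact ⟨g.2, Finset.mem_image_of_mem _ hg, c, hc, congrArg Prod.snd hx⟩

end Labels

end QuiverOrder

open QuiverOrder

theorem stmt16_general (A : Type) [CommMonoid A] (Ap : Submonoid A)
    -- A⁺ is integrally closed in A
    (hic : ∀ f : A,
      (∃ K : Finset A, ∀ n : ℕ, ∃ k ∈ K, ∃ h ∈ Ap, f ^ n = h * k) → f ∈ Ap)
    (I : Type) (hI : Finite I) (le : I × A → I × A → Prop)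
    -- finite presentation: the order is presented by a finite quiver
    (hfp : ∃ (E : Type) (_ : Finite E) (src tgt : E → I) (lab : E → A),
      ∀ x y : I × A, le x y ↔
        ∃ z : I × A,
          Relation.ReflTransGen
            (fun u v : I × A => ∃ e : E, v.1 = src e ∧ u = (tgt e, lab e * v.2)) z y ∧
          ∃ h ∈ Ap, x = (z.1, h * z.2)) :
    -- non-degeneracy ↔ lower finiteness
    ((∀ (i : I) (a b : A), le (i, a) (i, b) ↔ ∃ h ∈ Ap, a = h * b) ↔
      (∀ F : Finset (I × A), ∃ G : Finset (I × A),
        {x : I × A | ∃ h ∈ Ap, ∃ g ∈ F, le x (g.1, h * g.2)} =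
          {x : I × A | ∃ h ∈ Ap, ∃ g ∈ G, x = (g.1, h * g.2)})) := by
  obtain ⟨E, hE, src, tgt, lab, hfp⟩ := hfp
  obtain rfl : le = QuiverLE src tgt lab Ap :=
    funext₂ fun x y => propext ((hfp x y).trans (exists_reflTransGen_quiverStep_iff lab Ap))
  exact (quiverLE_nondegenerate_iff_cycle_prod_mem lab Ap).trans
    ⟨lowerFinite_quiverLE_of_cycle_prod_mem lab Ap,
      fun hlf _ _ hl => hl.prod_mem_of_lowerFinite lab Ap hic hlf⟩

/-- Let `(A;A⁺)` be an `𝔽₁`-domain: `A` cancellative away from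
zero (here, unpointed: cancellative), a localisation of the sharp submonoid `A⁺`,
with `A⁺` integrally closed in `A`.  Let `(M,≤)` be a lower saturated partially
ordered finite free `A`-module (modelled as `I × A`), presented by a finite quiver.
Then `(M,≤)` is non-degenerate (the induced order on each cyclic factor is the
`A⁺`-divisibility order) iff it is lower finite (the lower hull of every finitely
generated `A⁺`-submodule is finitely generated). -/
theorem stmt16 (A : Type) [CommMonoid A] (Ap : Submonoid A)
    -- A is cancellative (domain, away from the absent zero)
    (hcancel : ∀ a b c : A, a * b = a * c → b = c)
    -- A is a localisation of A⁺: every element of A is a fraction over A⁺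
    (hloc : ∀ a : A, ∃ s ∈ Ap, s * a ∈ Ap)
    -- A⁺ is sharp
    (hsharp : ∀ u ∈ Ap, (∃ v ∈ Ap, u * v = 1) → u = 1)
    -- A⁺ is integrally closed in A
    (hic : ∀ f : A,
      (∃ K : Finset A, ∀ n : ℕ, ∃ k ∈ K, ∃ h ∈ Ap, f ^ n = h * k) → f ∈ Ap)
    (I : Type) (hI : Finite I) (le : I × A → I × A → Prop)
    (hrefl : ∀ x, le x x)
    (htrans : ∀ x y z, le x y → le y z → le x z)
    (hantisymm : ∀ x y, le x y → le y x → x = y)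
    (hdiv : ∀ (x : I × A), ∀ h ∈ Ap, le (x.1, h * x.2) x)
    (hmono : ∀ (a : A) (x y : I × A), le x y → le (x.1, a * x.2) (y.1, a * y.2))
    -- lower saturation
    (hsat : ∀ D : Set (I × A),
      (∀ h ∈ Ap, ∀ x ∈ D, (x.1, h * x.2) ∈ D) →
      (∀ x y : I × A, le x y → y ∈ D → x ∈ D) →
      ∀ f : A, ∀ x y : I × A, le x y →
        y ∈ (fun z : I × A => (z.1, f * z.2)) '' D →
        x ∈ (fun z : I × A => (z.1, f * z.2)) '' D)
    -- finite presentation: the order is presented by a finite quiver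
    (hfp : ∃ (E : Type) (_ : Finite E) (src tgt : E → I) (lab : E → A),
      ∀ x y : I × A, le x y ↔
        ∃ z : I × A,
          Relation.ReflTransGen
            (fun u v : I × A => ∃ e : E, v.1 = src e ∧ u = (tgt e, lab e * v.2)) z y ∧
          ∃ h ∈ Ap, x = (z.1, h * z.2)) :
    -- non-degeneracy ↔ lower finiteness
    ((∀ (i : I) (a b : A), le (i, a) (i, b) ↔ ∃ h ∈ Ap, a = h * b) ↔
      (∀ F : Finset (I × A), ∃ G : Finset (I × A),
        {x : I × A | ∃ h ∈ Ap, ∃ g ∈ F, le x (g.1, h * g.2)} =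
          {x : I × A | ∃ h ∈ Ap, ∃ g ∈ G, x = (g.1, h * g.2)})) :=
  stmt16_general A Ap hic I hI le hfp
end

section
/- Let Γ ⊆ Γ′ be an extension of totally ordered abelian groups, and let Γ_∨ = Γ ∪ {-∞}, Γ′_∨ = Γ′ ∪ {-∞} be the associated idempotent semifields (with max as addition and group addition as multiplication). Then Γ′_∨ is a flat Γ_∨-module: every Γ_∨-linear map v : Γ_∨ⁿ → Γ′_∨ satisfying a relation v∘f = v∘g for f, g : Γ_∨ → Γ_∨ⁿ factors through a finite free Γ_∨-module in which the relation f = g holds. -/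
/-!
Factor `v` through `Γ_∨ⁿ` itself, with `u = v` and rows `w j` satisfying `v j + w j i ≤ v i` and
`v i ≤ v i + w i i`. Let `S` be the common value of `v ∘ f = v ∘ g`. If `S = -∞`, then `f j = g j`
whenever `v j ≠ -∞`, so take `w j = e j` if `f j = g j` and `w j = -∞` otherwise. Otherwise
`S = v a + f a = v b + g b` with finite terms, which forces `g a ≤ f a` and `f b ≤ g b`. The unit
row `e j` is then balanced by adding the entries `α - f a` at `a` and `α - g b` at `b`, where
`α = max (f j) (g j)`: both pairings become `α`, and `v j + α ≤ S` keeps the new entries within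
`v j + w j i ≤ v i`.
-/

open Finset Function

section MaxPlus
variable {ι : Type*} [Fintype ι]

lemma sup_sup_apply_add {M : Type*} [AddCommMonoid M] [LinearOrder M] [IsOrderedAddMonoid M]
    (r r' h : ι → WithBot M) :
    (univ.sup fun i => (r ⊔ r') i + h i) =
      (univ.sup fun i => r i + h i) ⊔ univ.sup fun i => r' i + h i := by
  simp only [Pi.sup_apply, max_add]
  exact sup_sup

lemma sup_update_bot_apply_add {M : Type*} [Add M] [LinearOrder M] [DecidableEq ι] (k : ι)
    (c : WithBot M) (h : ι → WithBot M) :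
    (univ.sup fun i => update (⊥ : ι → WithBot M) k c i + h i) = c + h k := by
  refine le_antisymm (Finset.sup_le fun i _ => ?_) (le_sup_of_le (mem_univ k) (by simp))
  rcases eq_or_ne i k with rfl | hik
  · simp
  · simp [hik]

lemma WithBot.add_coe_add_coe_of_add_eq_zero {M : Type*} [AddMonoid M] (x : WithBot M) {p q : M}
    (h : p + q = 0) : x + p + q = x := by
  rw [add_assoc, ← WithBot.coe_add, h, WithBot.coe_zero, add_zero]

lemma sup_add_balance_eq {G : Type*} [AddCommGroup G] [LinearOrder G] [IsOrderedAddMonoid G]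
    [DecidableEq ι] {f g r : ι → WithBot G} {a b : ι} {φ ψ : G} {α : WithBot G}
    (hfa : f a = φ) (hfb : f b ≤ g b) (hgb : g b = ψ) (hrf : (univ.sup fun i => r i + f i) ≤ α) :
    (univ.sup fun i =>
      (r ⊔ update ⊥ a (α + ↑(-φ)) ⊔ update ⊥ b (α + ↑(-ψ))) i + f i) = α := by
  have hα : α + ↑(-φ) + f a = α :=
    hfa ▸ WithBot.add_coe_add_coe_of_add_eq_zero α (neg_add_cancel φ)
  rw [sup_sup_apply_add, sup_sup_apply_add, sup_update_bot_apply_add, sup_update_bot_apply_add, hα]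
  refine le_antisymm (sup_le (sup_le hrf le_rfl) ?_) (le_sup_of_le_left le_sup_right)
  calc α + ↑(-ψ) + f b ≤ α + ↑(-ψ) + ψ := by rw [← hgb]; gcongr
    _ = α := WithBot.add_coe_add_coe_of_add_eq_zero α (neg_add_cancel ψ)

end MaxPlus

section Extension
variable {Γ' : Type*} [AddCommGroup Γ'] {Γ : AddSubgroup Γ'} {ι : Type*}

lemma map_coe_add (x y : WithBot Γ) :
    (x + y).map ((↑) : Γ → Γ') = x.map (↑) + y.map (↑) :=
  WithBot.map_add Γ.subtype x y

variable [LinearOrder Γ']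

lemma map_coe_le_map_coe {x y : WithBot Γ} : x.map ((↑) : Γ → Γ') ≤ y.map (↑) ↔ x ≤ y :=
  WithBot.map_le_iff _ Subtype.coe_le_coe

lemma map_coe_sup (x y : WithBot Γ) :
    (x ⊔ y).map ((↑) : Γ → Γ') = x.map (↑) ⊔ y.map (↑) :=
  Monotone.map_max fun _ _ h => map_coe_le_map_coe.2 h

lemma add_map_update_bot_le [DecidableEq ι] {v : ι → WithBot Γ'} {j k : ι} {c : WithBot Γ}
    (h : v j + c.map (↑) ≤ v k) (i : ι) :
    v j + (update (⊥ : ι → WithBot Γ) k c i).map (↑) ≤ v i := by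
  rcases eq_or_ne i k with rfl | hik
  · simpa using h
  · simp [hik]

section Fintype
variable [Fintype ι]

lemma exists_eq_add_coe_of_sup_ne_bot {v : ι → WithBot Γ'} {f : ι → WithBot Γ}
    (h : (univ.sup fun i => v i + (f i).map (↑)) ≠ ⊥) :
    ∃ a, ∃ φ : Γ, f a = φ ∧ v a ≠ ⊥ ∧
      (univ.sup fun i => v i + (f i).map (↑)) = v a + ((φ : Γ') : WithBot Γ') := by
  obtain ⟨a, -, ha⟩ := exists_mem_eq_sup univ
    (nonempty_iff_ne_empty.2 fun h' => h (by rw [h', sup_empty])) fun i => v i + (f i).map (↑)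
  obtain ⟨hva, hfa⟩ := WithBot.add_ne_bot.1 (ha ▸ h)
  obtain ⟨φ, hφ⟩ := WithBot.ne_bot_iff_exists.1 (WithBot.map_eq_bot_iff.not.1 hfa)
  exact ⟨a, φ, hφ.symm, hva, by rw [ha, ← hφ, WithBot.map_coe]⟩

/-- The rows `w j` of a factorization `v = v ∘ w` through `Γ_∨^ι` (see `sup_add_map_eq`), each of
which equalizes `f` and `g`. -/
structure IsEqualizingFactorization (v : ι → WithBot Γ') (f g : ι → WithBot Γ)
    (w : ι → ι → WithBot Γ) : Prop where
  add_map_le : ∀ j i, v j + (w j i).map (↑) ≤ v i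
  le_add_map_diag : ∀ i, v i ≤ v i + (w i i).map (↑)
  sup_add_eq : ∀ j, (univ.sup fun i => w j i + f i) = univ.sup fun i => w j i + g i

lemma IsEqualizingFactorization.sup_add_map_eq {v : ι → WithBot Γ'} {f g : ι → WithBot Γ}
    {w : ι → ι → WithBot Γ} (hw : IsEqualizingFactorization v f g w) (i : ι) :
    (univ.sup fun j => v j + (w j i).map (↑)) = v i :=
  le_antisymm (Finset.sup_le fun j _ => hw.add_map_le j i)
    (le_sup_of_le (mem_univ i) (hw.le_add_map_diag i))

lemma exists_isEqualizingFactorization_of_sup_eq_bot [DecidableEq ι] {v : ι → WithBot Γ'}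
    {f g : ι → WithBot Γ}
    (hf : (univ.sup fun i => v i + (f i).map (↑)) = ⊥)
    (hg : (univ.sup fun i => v i + (g i).map (↑)) = ⊥) :
    ∃ w, IsEqualizingFactorization v f g w := by
  refine ⟨fun j => update ⊥ j (if f j = g j then 0 else ⊥),
    fun j i => add_map_update_bot_le ?_ i, fun i => ?_, fun j => ?_⟩
  · split_ifs <;> simp
  · rw [update_self]
    split_ifs with hfg
    · simp
    · have hvi : v i = ⊥ := by
        by_contra hvi
        have hfi := (Finset.sup_eq_bot_iff _ _).1 hf i (mem_univ i)
        have hgi := (Finset.sup_eq_bot_iff _ _).1 hg i (mem_univ i)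
        simp only [WithBot.add_eq_bot, hvi, WithBot.map_eq_bot_iff, false_or] at hfi hgi
        exact hfg (hfi.trans hgi.symm)
      simp [hvi]
  · simp only [sup_update_bot_apply_add]
    split_ifs with hfg
    · rw [hfg]
    · simp

end Fintype

variable [IsOrderedAddMonoid Γ']

lemma add_map_add_coe_neg_le {x y : WithBot Γ'} {c : WithBot Γ} {φ : Γ}
    (h : x + c.map (↑) ≤ y + ((φ : Γ') : WithBot Γ')) : x + (c + ↑(-φ)).map (↑) ≤ y :=
  calc x + (c + ↑(-φ)).map (↑) = x + c.map (↑) + ↑(-(φ : Γ')) := by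
        rw [map_coe_add, WithBot.map_coe, add_assoc, AddSubgroup.coe_neg]
    _ ≤ y + ((φ : Γ') : WithBot Γ') + ↑(-(φ : Γ')) := add_le_add_left h _
    _ = y := WithBot.add_coe_add_coe_of_add_eq_zero y (add_neg_cancel _)

variable [Fintype ι] [DecidableEq ι] {v : ι → WithBot Γ'} {f g : ι → WithBot Γ}

lemma exists_isEqualizingFactorization_of_sup_ne_bot
    (hS : (univ.sup fun i => v i + (f i).map (↑)) ≠ ⊥)
    (hrel : (univ.sup fun i => v i + (f i).map (↑)) = univ.sup fun i => v i + (g i).map (↑)) :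
    ∃ w, IsEqualizingFactorization v f g w := by
  obtain ⟨a, φ, hfa, hva, hSa⟩ := exists_eq_add_coe_of_sup_ne_bot hS
  obtain ⟨b, ψ, hgb, hvb, hSb⟩ := exists_eq_add_coe_of_sup_ne_bot (hrel ▸ hS)
  have hga : g a ≤ f a := by
    rw [← map_coe_le_map_coe (Γ' := Γ'), ← WithBot.add_le_add_iff_left hva, hfa, WithBot.map_coe,
      ← hSa, hrel]
    exact le_sup (f := fun i => v i + (g i).map (↑)) (mem_univ a)
  have hfb : f b ≤ g b := by
    rw [← map_coe_le_map_coe (Γ' := Γ'), ← WithBot.add_le_add_iff_left hvb, hgb, WithBot.map_coe,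
      ← hSb, ← hrel]
    exact le_sup (f := fun i => v i + (f i).map (↑)) (mem_univ b)
  have hvS : ∀ j, v j + (f j ⊔ g j).map (↑) ≤ univ.sup fun i => v i + (f i).map (↑) := fun j => by
    rw [map_coe_sup, add_max]
    exact sup_le (le_sup (f := fun i => v i + (f i).map (↑)) (mem_univ j))
      (hrel ▸ le_sup (f := fun i => v i + (g i).map (↑)) (mem_univ j))
  refine ⟨fun j => update ⊥ j 0 ⊔ update ⊥ a ((f j ⊔ g j) + ↑(-φ)) ⊔
    update ⊥ b ((f j ⊔ g j) + ↑(-ψ)), fun j i => ?_, fun i => ?_, fun j => ?_⟩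
  · simp only [Pi.sup_apply, map_coe_sup, add_max, sup_le_iff]
    exact ⟨⟨add_map_update_bot_le (by simp) i,
      add_map_update_bot_le (add_map_add_coe_neg_le ((hvS j).trans_eq hSa)) i⟩,
      add_map_update_bot_le (add_map_add_coe_neg_le ((hvS j).trans_eq (hrel.trans hSb))) i⟩
  · calc v i = v i + (update (⊥ : ι → WithBot Γ) i 0 i).map (↑) := by simp
      _ ≤ _ := by
        gcongr
        exact map_coe_le_map_coe.2 (le_sup_left.trans le_sup_left)
  · have hr (h : ι → WithBot Γ) :
        (univ.sup fun i => update (⊥ : ι → WithBot Γ) j 0 i + h i) = h j := by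
      rw [sup_update_bot_apply_add, zero_add]
    rw [sup_add_balance_eq hfa hfb hgb ((hr f).trans_le le_sup_left), sup_right_comm,
      sup_add_balance_eq hgb hga hfa ((hr g).trans_le le_sup_right)]

end Extension

/-- Let `Γ ⊆ Γ′` be an extension of totally ordered abelian
groups and `Γ_∨ = Γ ∪ {-∞}`, `Γ′_∨ = Γ′ ∪ {-∞}` the associated idempotent
semifields.  Then `Γ′_∨` is a flat `Γ_∨`-module: every `Γ_∨`-linear map
`v : Γ_∨ⁿ → Γ′_∨` (given by a tuple `(vᵢ)`, with `v(f) = maxᵢ (vᵢ + fᵢ)`)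
satisfying a relation `v ∘ f = v ∘ g` factors through a finite free `Γ_∨`-module in
which the relation `f = g` holds. -/
theorem stmt18 (Γ' : Type) [AddCommGroup Γ'] [LinearOrder Γ'] [IsOrderedAddMonoid Γ'] (Γ : AddSubgroup Γ')
    (n : ℕ) (v : Fin n → WithBot Γ') (f g : Fin n → WithBot ↥Γ)
    (hrel :
      Finset.univ.sup (fun i => v i + (f i).map (fun x : ↥Γ => (x : Γ'))) =
      Finset.univ.sup (fun i => v i + (g i).map (fun x : ↥Γ => (x : Γ')))) :
    ∃ (m : ℕ) (w : Fin m → Fin n → WithBot ↥Γ) (u : Fin m → WithBot Γ'),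
      (∀ i : Fin n,
        Finset.univ.sup (fun j => u j + (w j i).map (fun x : ↥Γ => (x : Γ'))) = v i) ∧
      (∀ j : Fin m,
        Finset.univ.sup (fun i => w j i + f i) =
        Finset.univ.sup (fun i => w j i + g i)) := by
  obtain ⟨w, hw⟩ : ∃ w, IsEqualizingFactorization v f g w := by
    by_cases hS : (univ.sup fun i => v i + (f i).map (↑)) = ⊥
    · exact exists_isEqualizingFactorization_of_sup_eq_bot hS (hrel ▸ hS)
    · exact exists_isEqualizingFactorization_of_sup_ne_bot hS hrel
  exact ⟨n, w, v, hw.sup_add_map_eq, hw.sup_add_eq⟩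
end

section
/- (Unicity of generators.) Let A be a totally ordered abelian group written additively, A⁺ its submonoid of non-positive elements together with a formal bottom element, and let K be a convex A⁺-submodule of A (with formal -∞) that is the convex closure of a finitely generated A⁺-submodule. Then K has a unique minimal generating set as a convex A⁺-submodule: if (X_i)_{i∈I} and (Y_j)_{j∈J} are both minimal sets of generators of K under taking A⁺-translates and convex combinations with natural coefficients (n·x = Σ n_j y_j with n = Σ n_j), then {X_i} = {Y_j}. -/
/-- A convex `A⁺`-submodule of `A_∨ = A ∪ {-∞}` (for `A` a totally ordered abelian
group, `A⁺` its non-positive elements together with the bottom element): a subset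
containing `⊥`, closed under translation by non-positive elements, and closed under
convexity: if `n • x = Σ nⱼ • yⱼ` with the `yⱼ ∈ K` and `n = Σ nⱼ ≥ 1`, then
`x ∈ K`. -/
def IsConvexSub (A : Type) [AddCommGroup A] [LinearOrder A] [IsOrderedAddMonoid A] (K : Set (WithBot A)) :
    Prop :=
  ⊥ ∈ K ∧
  (∀ h : A, h ≤ 0 → ∀ x ∈ K, (h : WithBot A) + x ∈ K) ∧
  (∀ (x : WithBot A) (k : ℕ) (m : Fin k → ℕ) (y : Fin k → WithBot A),
    (∀ j, y j ∈ K) → 1 ≤ ∑ j, m j →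
    (∑ j, m j) • x = ∑ j, m j • y j → x ∈ K)

/-- The convex `A⁺`-closure of a subset: the smallest convex `A⁺`-submodule
containing it. -/
def convClosure (A : Type) [AddCommGroup A] [LinearOrder A] [IsOrderedAddMonoid A] (G : Set (WithBot A)) :
    Set (WithBot A) :=
  ⋂₀ {K | IsConvexSub A K ∧ G ⊆ K}

/-!
Convex `A⁺`-submodules of `WithBot A` are exactly the lower sets containing `⊥`: translating by a
non-positive element moves a point down, and `n • x = Σ nⱼ • yⱼ` forces `x` below the largest `yⱼ`
with `nⱼ ≠ 0`. So the convex closure of `G` is the lower closure of `insert ⊥ G`, which for finite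
`G` is an interval `Iic g`. Every generating set of `Iic g` contains `g` unless `g = ⊥`, while
`{g} \ {⊥}` already generates, so it is the only minimal generating set.
-/

namespace WithBot

variable {A : Type*} [AddCommGroup A] [LinearOrder A] [IsOrderedAddMonoid A]

lemma le_of_nsmul_le_nsmul {n : ℕ} (hn : n ≠ 0) {x y : WithBot A} (h : n • x ≤ n • y) :
    x ≤ y := by
  induction x with
  | bot => exact bot_le
  | coe a =>
    induction y with
    | bot =>
      obtain ⟨n, rfl⟩ := Nat.exists_eq_succ_of_ne_zero hn
      simp [succ_nsmul, ← coe_nsmul] at h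
    | coe b =>
      rw [← coe_nsmul, ← coe_nsmul, coe_le_coe] at h
      exact coe_le_coe.2 ((nsmul_le_nsmul_iff_right hn).1 h)

lemma exists_le_of_nsmul_eq_sum {k : ℕ} {m : Fin k → ℕ} {x : WithBot A} {y : Fin k → WithBot A}
    (hm : ∑ j, m j ≠ 0) (h : (∑ j, m j) • x = ∑ j, m j • y j) : ∃ j, m j ≠ 0 ∧ x ≤ y j := by
  obtain ⟨j₁, -, hj₁⟩ := Finset.exists_ne_zero_of_sum_ne_zero hm
  obtain ⟨j₀, hj₀, hmax⟩ := Finset.exists_max_image {j | m j ≠ 0} y ⟨j₁, by simpa using hj₁⟩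
  refine ⟨j₀, by simpa using hj₀, le_of_nsmul_le_nsmul hm ?_⟩
  calc (∑ j, m j) • x = ∑ j, m j • y j := h
    _ ≤ ∑ j, m j • y j₀ := Finset.sum_le_sum fun j _ => by
        by_cases hj : m j = 0
        · simp [hj]
        · exact nsmul_le_nsmul_right (hmax j (by simpa using hj)) _
    _ = (∑ j, m j) • y j₀ := Finset.sum_nsmul_assoc ..

end WithBot

section LowerClosure

variable {α : Type*}

lemma IsGreatest.lowerClosure_eq_Iic [Preorder α] {s : Set α} {g : α} (h : IsGreatest s g) :
    (lowerClosure s : Set α) = Set.Iic g :=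
  Set.Subset.antisymm (lowerClosure_min (fun _ hx => h.2 hx) (isLowerSet_Iic g))
    fun _ hx => ⟨g, h.1, hx⟩

variable [PartialOrder α] [OrderBot α]

lemma lowerClosure_insert_bot_singleton_sdiff_bot (g : α) :
    (lowerClosure (insert ⊥ ({g} \ {⊥})) : Set α) = Set.Iic g := by
  rw [Set.insert_sdiff_singleton]
  exact IsGreatest.lowerClosure_eq_Iic ⟨by simp, by simp⟩

lemma mem_of_lowerClosure_insert_bot_eq_Iic {Z : Set α} {g : α}
    (h : (lowerClosure (insert ⊥ Z) : Set α) = Set.Iic g) (hg : g ≠ ⊥) : g ∈ Z := by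
  obtain ⟨z, hz, hgz⟩ : g ∈ (lowerClosure (insert ⊥ Z) : Set α) := h ▸ Set.mem_Iic.2 le_rfl
  have hzg : z ∈ Set.Iic g := h ▸ subset_lowerClosure hz
  rw [← le_antisymm hgz hzg] at hz
  exact hz.resolve_left hg

end LowerClosure

variable {A : Type} [AddCommGroup A] [LinearOrder A] [IsOrderedAddMonoid A]

lemma isConvexSub_iff {K : Set (WithBot A)} : IsConvexSub A K ↔ ⊥ ∈ K ∧ IsLowerSet K := by
  constructor
  · rintro ⟨hbot, htrans, -⟩
    refine ⟨hbot, fun y x hxy hy => ?_⟩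
    induction x with
    | bot => exact hbot
    | coe a =>
      induction y with
      | bot => exact absurd hxy (by simp)
      | coe b =>
        simpa [← WithBot.coe_add] using
          htrans (a - b) (sub_nonpos.2 (WithBot.coe_le_coe.1 hxy)) b hy
  · rintro ⟨hbot, hlower⟩
    refine ⟨hbot, fun h hh x hx => hlower ?_ hx, fun x k m y hy hm h => ?_⟩
    · simpa using add_le_add_left (WithBot.coe_le_zero.2 hh) x
    · obtain ⟨j, -, hj⟩ := WithBot.exists_le_of_nsmul_eq_sum (by omega) h
      exact hlower hj (hy j)

lemma convClosure_eq_lowerClosure (G : Set (WithBot A)) :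
    convClosure A G = lowerClosure (insert ⊥ G) := by
  apply Set.Subset.antisymm
  · exact Set.sInter_subset_of_mem ⟨isConvexSub_iff.2 ⟨subset_lowerClosure (Set.mem_insert _ _),
      (lowerClosure _).lower⟩, (Set.subset_insert _ _).trans subset_lowerClosure⟩
  · refine Set.subset_sInter fun K ⟨hK, hGK⟩ => ?_
    obtain ⟨hbot, hlower⟩ := isConvexSub_iff.1 hK
    exact lowerClosure_min (Set.insert_subset hbot hGK) hlower

lemma exists_convClosure_finset_eq_Iic (F : Finset (WithBot A)) :
    ∃ g, convClosure A F = Set.Iic g := by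
  refine ⟨(insert ⊥ F).max' (Finset.insert_nonempty _ _), ?_⟩
  rw [convClosure_eq_lowerClosure, ← (Finset.isGreatest_max' _ _).lowerClosure_eq_Iic,
    Finset.coe_insert]

lemma eq_singleton_sdiff_bot_of_minimal {Z : Set (WithBot A)} {g : WithBot A}
    (hZ : convClosure A Z = Set.Iic g) (hmin : ∀ Z' ⊂ Z, convClosure A Z' ≠ Set.Iic g) :
    Z = {g} \ {⊥} := by
  rw [convClosure_eq_lowerClosure] at hZ
  have hsub : {g} \ {⊥} ⊆ Z := by
    rintro x ⟨rfl, hx⟩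
    exact mem_of_lowerClosure_insert_bot_eq_Iic hZ hx
  by_contra hne
  exact hmin _ (hsub.ssubset_of_ne (Ne.symm hne))
    (by rw [convClosure_eq_lowerClosure, lowerClosure_insert_bot_singleton_sdiff_bot])

theorem stmt19_general (A : Type) [AddCommGroup A] [LinearOrder A] [IsOrderedAddMonoid A] (K : Set (WithBot A))
    (F : Finset (WithBot A))
    (hfg : K = convClosure A (↑F : Set (WithBot A)))
    (X Y : Set (WithBot A))
    (hXgen : convClosure A X = K) (hXmin : ∀ X' ⊂ X, convClosure A X' ≠ K)
    (hYgen : convClosure A Y = K) (hYmin : ∀ Y' ⊂ Y, convClosure A Y' ≠ K) :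
    X = Y := by
  obtain ⟨g, hg⟩ := exists_convClosure_finset_eq_Iic F
  subst hfg
  rw [hg] at hXgen hXmin hYgen hYmin
  rw [eq_singleton_sdiff_bot_of_minimal hXgen hXmin, eq_singleton_sdiff_bot_of_minimal hYgen hYmin]

/-- **Unicity of generators.** Let `A` be a totally ordered abelian
group and `K` a convex `A⁺`-submodule of `A_∨` which is the convex closure of a
finitely generated `A⁺`-submodule.  Then `K` has a unique minimal generating set as
a convex `A⁺`-submodule: any two minimal generating sets coincide. -/
theorem stmt19 (A : Type) [AddCommGroup A] [LinearOrder A] [IsOrderedAddMonoid A] (K : Set (WithBot A))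
    (hK : IsConvexSub A K) (F : Finset (WithBot A))
    (hfg : K = convClosure A (↑F : Set (WithBot A)))
    (X Y : Set (WithBot A))
    (hXgen : convClosure A X = K) (hXmin : ∀ X' ⊂ X, convClosure A X' ≠ K)
    (hYgen : convClosure A Y = K) (hYmin : ∀ Y' ⊂ Y, convClosure A Y' ≠ K) :
    X = Y :=
  stmt19_general A K F hfg X Y hXgen hXmin hYgen hYmin
end
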